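/- arXiv:1208.1342 — 12 statements merged into one kernel-verified Lean document; each statement's English description precedes it below -/
import Mathlib

section
/- Let B be a finite group and Y ⊆ B with Y = Y⁻¹ and 1 ∉ Y. For i = 1, 2 let A_i be a finite group, X_i ⊆ A_i with X_i = X_i⁻¹, 1 ∉ X_i, and X_i generating A_i, and let f_i : A_i → B be a surjective group homomorphism such that f_i(X_i) = Y, X_i ∩ ker f_i = ∅, and the restriction of f_i to X_i is injective. Then there exists a graph isomorphism Φ : Cay(A_1, X_1) ≅ Cay(A_2, X_2) with f_2 ∘ Φ = f_1 (as maps on vertices) if and only if there exists a group isomorphism φ : A_1 ≅ A_2 with f_2 ∘ φ = f_1 and φ(X_1) = X_2. -/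
/-! Normalise a fibre-preserving graph isomorphism `Φ` to `ψ = (Φ 1)⁻¹ • Φ`, which fixes `1` and
still lies over `f₁`. For `x ∈ X₁` the increment `(ψ a)⁻¹ ψ (a x)` lies in `X₂` and has the same
image `f₁ x` as `ψ x ∈ X₂`; since `f₂` is injective on `X₂`, `ψ (a x) = ψ a ψ x`. As `X₁`
generates `A₁`, `ψ` is a group isomorphism, and it carries `X₁` onto `X₂` because both sets map
onto `Y` and `f₂` is injective on `X₂`. Conversely, a group isomorphism carrying `X₁` onto `X₂` is an isomorphism
of the Cayley graphs. -/

/-- The Cayley graph of a group `A` relative to a subset `X` (assumed symmetric and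
not containing `1`): vertices are elements of `A`, and `g`, `h` are adjacent iff
`g⁻¹ * h ∈ X`. -/
def cayleyGraph {A : Type*} [Group A] (X : Set A) : SimpleGraph A :=
  SimpleGraph.fromRel (fun g h => g⁻¹ * h ∈ X)

theorem Set.image_eq_of_mapsTo_of_comp_eq {α β γ : Type*} {f₁ : α → γ} {f₂ : β → γ}
    {ψ : α → β} {s : Set α} {t : Set β} (hψ : MapsTo ψ s t) (hcomp : ∀ a, f₂ (ψ a) = f₁ a)
    (hsub : f₂ '' t ⊆ f₁ '' s) (hinj : InjOn f₂ t) : ψ '' s = t := by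
  refine hψ.image_subset.antisymm fun y hy => ?_
  obtain ⟨x, hx, hfx⟩ := hsub ⟨y, hy, rfl⟩
  exact ⟨x, hx, hinj (hψ hx) hy (by rw [hcomp, hfx])⟩

section CayleyGraph

variable {A A' B : Type*} [Group A] [Group A'] [Group B]

theorem cayleyGraph_adj_mul_right {X : Set A} (hX1 : (1 : A) ∉ X) {x : A} (hx : x ∈ X)
    (a : A) : (cayleyGraph X).Adj a (a * x) := by
  refine ⟨fun h => hX1 ?_, Or.inl (by simpa using hx)⟩
  rwa [left_eq_mul.mp h] at hx

theorem inv_mul_mem_of_cayleyGraph_adj {X : Set A} (hX : X⁻¹ = X) {g h : A}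
    (hgh : (cayleyGraph X).Adj g h) : g⁻¹ * h ∈ X := by
  rcases hgh.2 with hmem | hmem
  · exact hmem
  · rw [← hX]
    simpa using hmem

theorem cayleyGraph_adj_mul_left_iff (X : Set A) (d g h : A) :
    (cayleyGraph X).Adj (d * g) (d * h) ↔ (cayleyGraph X).Adj g h := by
  simp [cayleyGraph, mul_assoc]

def cayleyGraphMulLeft (X : Set A) (d : A) : cayleyGraph X ≃g cayleyGraph X where
  toEquiv := Equiv.mulLeft d
  map_rel_iff' := cayleyGraph_adj_mul_left_iff X d _ _

@[simp]
theorem cayleyGraphMulLeft_apply (X : Set A) (d g : A) : cayleyGraphMulLeft X d g = d * g :=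
  rfl

def MulEquiv.cayleyGraphIso {X : Set A} {X' : Set A'} (φ : A ≃* A') (hφX : φ '' X = X') :
    cayleyGraph X ≃g cayleyGraph X' where
  toEquiv := φ.toEquiv
  map_rel_iff' {g h} := by
    have hmem : ∀ z, φ z ∈ X' ↔ z ∈ X := by
      simp [← hφX, φ.injective.mem_set_image]
    simp only [cayleyGraph, SimpleGraph.fromRel_adj, MulEquiv.toEquiv_eq_coe,
      EquivLike.coe_coe, ← map_inv, ← map_mul, hmem, φ.injective.ne_iff]

namespace SimpleGraph.Hom

variable {X₁ : Set A} {X₂ : Set A'} (ψ : cayleyGraph X₁ →g cayleyGraph X₂)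

theorem inv_mul_map_mul_mem (hX₁1 : (1 : A) ∉ X₁) (hX₂ : X₂⁻¹ = X₂) (a : A) {x : A}
    (hx : x ∈ X₁) : (ψ a)⁻¹ * ψ (a * x) ∈ X₂ :=
  inv_mul_mem_of_cayleyGraph_adj hX₂ (ψ.map_adj (cayleyGraph_adj_mul_right hX₁1 hx a))

theorem map_mem_of_map_one (hX₁1 : (1 : A) ∉ X₁) (hX₂ : X₂⁻¹ = X₂) (hψ1 : ψ 1 = 1) {x : A}
    (hx : x ∈ X₁) : ψ x ∈ X₂ := by
  simpa [hψ1] using inv_mul_map_mul_mem ψ hX₁1 hX₂ 1 hx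

theorem map_mul_of_injOn (hX₁1 : (1 : A) ∉ X₁) (hX₂ : X₂⁻¹ = X₂) (hψ1 : ψ 1 = 1)
    {f₁ : A →* B} {f₂ : A' →* B} (hf : ∀ a, f₂ (ψ a) = f₁ a) (hf₂inj : Set.InjOn f₂ X₂)
    (a : A) {x : A} (hx : x ∈ X₁) : ψ (a * x) = ψ a * ψ x := by
  have hincr : (ψ a)⁻¹ * ψ (a * x) = ψ x :=
    hf₂inj (inv_mul_map_mul_mem ψ hX₁1 hX₂ a hx) (map_mem_of_map_one ψ hX₁1 hX₂ hψ1 hx)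
      (by simp [hf])
  rw [← hincr, mul_inv_cancel_left]

end SimpleGraph.Hom

end CayleyGraph

theorem stmt0_general {B A₁ A₂ : Type*} [Group B] [Group A₁] [Group A₂] [Finite A₁] (Y : Set B)
    (X₁ : Set A₁) (hX₁1 : (1 : A₁) ∉ X₁) (hX₁gen : Subgroup.closure X₁ = ⊤)
    (X₂ : Set A₂) (hX₂ : X₂⁻¹ = X₂)
    (f₁ : A₁ →* B) (hf₁X : f₁ '' X₁ = Y)
    (f₂ : A₂ →* B) (hf₂X : f₂ '' X₂ = Y) (hf₂inj : Set.InjOn f₂ X₂) :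
    (∃ Φ : cayleyGraph X₁ ≃g cayleyGraph X₂, ∀ a, f₂ (Φ a) = f₁ a) ↔
    (∃ φ : A₁ ≃* A₂, (∀ a, f₂ (φ a) = f₁ a) ∧ φ '' X₁ = X₂) := by
  constructor
  · rintro ⟨Φ, hΦ⟩
    set ψ := (cayleyGraphMulLeft X₂ (Φ 1)⁻¹).comp Φ
    have hψ1 : ψ 1 = 1 := inv_mul_cancel _
    have hψf : ∀ a, f₂ (ψ a) = f₁ a := by simp [ψ, hΦ]
    have hgen : Submonoid.closure X₁ = ⊤ := by
      rw [← Subgroup.closure_toSubmonoid_of_finite, hX₁gen, Subgroup.top_toSubmonoid]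
    have hψmul := (MonoidHom.ofClosureMEqTopRight ψ hgen hψ1
      fun a _ hx => ψ.toHom.map_mul_of_injOn hX₁1 hX₂ hψ1 hψf hf₂inj a hx).map_mul
    refine ⟨MulEquiv.mk' ψ.toEquiv hψmul, hψf, ?_⟩
    exact Set.image_eq_of_mapsTo_of_comp_eq
      (fun x hx => ψ.toHom.map_mem_of_map_one hX₁1 hX₂ hψ1 hx) hψf (by rw [hf₁X, hf₂X]) hf₂inj
  · rintro ⟨φ, hφf, hφX⟩
    exact ⟨φ.cayleyGraphIso hφX, hφf⟩

theorem stmt0 {B A₁ A₂ : Type*} [Group B] [Group A₁] [Group A₂]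
    [Finite B] [Finite A₁] [Finite A₂]
    (Y : Set B) (hY : Y⁻¹ = Y) (hY1 : (1 : B) ∉ Y)
    (X₁ : Set A₁) (hX₁ : X₁⁻¹ = X₁) (hX₁1 : (1 : A₁) ∉ X₁)
    (hX₁gen : Subgroup.closure X₁ = ⊤)
    (X₂ : Set A₂) (hX₂ : X₂⁻¹ = X₂) (hX₂1 : (1 : A₂) ∉ X₂)
    (hX₂gen : Subgroup.closure X₂ = ⊤)
    (f₁ : A₁ →* B) (hf₁ : Function.Surjective f₁) (hf₁X : f₁ '' X₁ = Y)
    (hf₁ker : X₁ ∩ (f₁.ker : Set A₁) = ∅) (hf₁inj : Set.InjOn f₁ X₁)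
    (f₂ : A₂ →* B) (hf₂ : Function.Surjective f₂) (hf₂X : f₂ '' X₂ = Y)
    (hf₂ker : X₂ ∩ (f₂.ker : Set A₂) = ∅) (hf₂inj : Set.InjOn f₂ X₂) :
    (∃ Φ : cayleyGraph X₁ ≃g cayleyGraph X₂, ∀ a, f₂ (Φ a) = f₁ a) ↔
    (∃ φ : A₁ ≃* A₂, (∀ a, f₂ (φ a) = f₁ a) ∧ φ '' X₁ = X₂) :=
  stmt0_general Y X₁ hX₁1 hX₁gen X₂ hX₂ f₁ hf₁X f₂ hf₂X hf₂inj
end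

section
/- Let l, l' be natural numbers, n = l + l', B an abelian group, and y : Fin l → B, y' : Fin l' → B such that the 2l + l' elements y_1, …, y_l, −y_1, …, −y_l, y'_1, …, y'_{l'} are pairwise distinct. Define ρ : ℤ^n → B by ρ(a) = Σ_{i=1}^{l} a_i·y_i + Σ_{j=1}^{l'} a_{l+j}·y'_j and set R(Y) = ker ρ. Let C_1, C_2 be subgroups of ℤ^n with C_1 ≤ R(Y) and C_2 ≤ R(Y), let q_i : ℤ^n → ℤ^n/C_i be the quotient maps, and let π_i : ℤ^n/C_i → ℤ^n/R(Y) be the induced projections. Let E_1, …, E_n denote the standard basis vectors of ℤ^n. Suppose φ : ℤ^n/C_1 → ℤ^n/C_2 is a group isomorphism such that π_2 ∘ φ = π_1 and φ maps the set {q_1(E_1), …, q_1(E_l), −q_1(E_1), …, −q_1(E_l), q_1(E_{l+1}), …, q_1(E_{l+l'})} onto the set {q_2(E_1), …, q_2(E_l), −q_2(E_1), …, −q_2(E_l), q_2(E_{l+1}), …, q_2(E_{l+l'})}. Then C_1 = C_2. -/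
/-!
Since `π₂ ∘ φ = π₁`, `φ` sends `q₁(v)` to an element with the same image in `ℤⁿ ⧸ R(Y)` as `v`.
The elements `±E_i`, `E_{l+j}` have pairwise distinct `ρ`-values, hence pairwise distinct images in
`ℤⁿ ⧸ R(Y)`, so `φ` can only send `q₁(E_k)` to `q₂(E_k)`. Thus `φ ∘ q₁ = q₂`, and comparing kernels
gives `C₁ = C₂`.
-/

open QuotientAddGroup

section
variable {G : Type*} [AddCommGroup G]

theorem AddSubgroup.eq_of_addEquiv_comp_mk' {C₁ C₂ : AddSubgroup G} (φ : G ⧸ C₁ ≃+ G ⧸ C₂)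
    (h : (φ : G ⧸ C₁ →+ G ⧸ C₂).comp (mk' C₁) = mk' C₂) : C₁ = C₂ := by
  rw [← ker_mk' C₁, ← ker_mk' C₂, ← h, AddMonoidHom.ker_addEquiv_comp]

theorem QuotientAddGroup.addEquiv_mk_eq_mk_of_image_range_subset {ι : Type*} {s : ι → G}
    {R C₁ C₂ : AddSubgroup G} (hs : Function.Injective fun i => (s i : G ⧸ R))
    (hC₁ : C₁ ≤ R) (hC₂ : C₂ ≤ R) (φ : G ⧸ C₁ ≃+ G ⧸ C₂)
    (hπ : ∀ w, map C₂ R (AddMonoidHom.id _) hC₂ (φ w) = map C₁ R (AddMonoidHom.id _) hC₁ w)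
    (hφ : φ '' Set.range (fun i => (s i : G ⧸ C₁)) ⊆ Set.range (fun i => (s i : G ⧸ C₂)))
    (i : ι) : φ (s i) = s i := by
  obtain ⟨j, hj⟩ := hφ ⟨_, ⟨i, rfl⟩, rfl⟩
  have hR : (s j : G ⧸ R) = s i := by
    have h := hπ (s i)
    rw [← hj] at h
    exact h
  rw [← hj, hs hR]

end

theorem Fin.natAdd_ne_castAdd {m n : ℕ} (i : Fin m) (j : Fin n) :
    Fin.natAdd m j ≠ Fin.castAdd n i := by
  simp only [ne_eq, Fin.ext_iff, Fin.val_natAdd, Fin.val_castAdd]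
  omega

section
variable (l l' : ℕ)

def signedBasis : Fin l ⊕ (Fin l ⊕ Fin l') → (Fin (l + l') → ℤ) :=
  Sum.elim (fun i => Pi.single (Fin.castAdd l' i) 1)
    (Sum.elim (fun i => -Pi.single (Fin.castAdd l' i) 1) (fun j => Pi.single (Fin.natAdd l j) 1))

variable {l l'}

theorem comp_signedBasis {B : Type*} [AddCommGroup B] {y : Fin l → B} {y' : Fin l' → B}
    {ρ : (Fin (l + l') → ℤ) →+ B}
    (hρ : ∀ a, ρ a =
      (∑ i : Fin l, a (Fin.castAdd l' i) • y i) + ∑ j : Fin l', a (Fin.natAdd l j) • y' j) :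
    ρ ∘ signedBasis l l' = Sum.elim y (Sum.elim (fun i : Fin l => -y i) y') := by
  ext (i | i | j) <;>
    simp [signedBasis, hρ, Pi.single_apply, Fin.natAdd_ne_castAdd, (Fin.natAdd_ne_castAdd _ _).symm]

theorem range_mk_signedBasis (C : AddSubgroup (Fin (l + l') → ℤ)) :
    Set.range (fun k => (signedBasis l l' k : (Fin (l + l') → ℤ) ⧸ C)) =
      (Set.range fun i : Fin l =>
            ((Pi.single (Fin.castAdd l' i) 1 : Fin (l + l') → ℤ) : (Fin (l + l') → ℤ) ⧸ C)) ∪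
          (Set.range fun i : Fin l =>
            -((Pi.single (Fin.castAdd l' i) 1 : Fin (l + l') → ℤ) : (Fin (l + l') → ℤ) ⧸ C)) ∪
          (Set.range fun j : Fin l' =>
            ((Pi.single (Fin.natAdd l j) 1 : Fin (l + l') → ℤ) : (Fin (l + l') → ℤ) ⧸ C)) := by
  ext x
  simp [signedBasis, Sum.exists, or_assoc]

end

theorem stmt2 {l l' : ℕ} {B : Type*} [AddCommGroup B]
    (y : Fin l → B) (y' : Fin l' → B)
    (hdist : Function.Injective
      (Sum.elim y (Sum.elim (fun i : Fin l => -y i) y') : Fin l ⊕ (Fin l ⊕ Fin l') → B))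
    (ρ : (Fin (l + l') → ℤ) →+ B)
    (hρ : ∀ a, ρ a =
      (∑ i : Fin l, a (Fin.castAdd l' i) • y i) + ∑ j : Fin l', a (Fin.natAdd l j) • y' j)
    (RY : AddSubgroup (Fin (l + l') → ℤ)) (hRY : RY = ρ.ker)
    (C₁ C₂ : AddSubgroup (Fin (l + l') → ℤ)) (hC₁ : C₁ ≤ RY) (hC₂ : C₂ ≤ RY)
    (φ : ((Fin (l + l') → ℤ) ⧸ C₁) ≃+ ((Fin (l + l') → ℤ) ⧸ C₂))
    (hπ : ∀ w, QuotientAddGroup.map C₂ RY (AddMonoidHom.id _) hC₂ (φ w) =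
      QuotientAddGroup.map C₁ RY (AddMonoidHom.id _) hC₁ w)
    (hE : φ ''
        ((Set.range fun i : Fin l =>
            ((Pi.single (Fin.castAdd l' i) 1 : Fin (l + l') → ℤ) : (Fin (l + l') → ℤ) ⧸ C₁)) ∪
          (Set.range fun i : Fin l =>
            -((Pi.single (Fin.castAdd l' i) 1 : Fin (l + l') → ℤ) : (Fin (l + l') → ℤ) ⧸ C₁)) ∪
          (Set.range fun j : Fin l' =>
            ((Pi.single (Fin.natAdd l j) 1 : Fin (l + l') → ℤ) : (Fin (l + l') → ℤ) ⧸ C₁))) =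
        ((Set.range fun i : Fin l =>
            ((Pi.single (Fin.castAdd l' i) 1 : Fin (l + l') → ℤ) : (Fin (l + l') → ℤ) ⧸ C₂)) ∪
          (Set.range fun i : Fin l =>
            -((Pi.single (Fin.castAdd l' i) 1 : Fin (l + l') → ℤ) : (Fin (l + l') → ℤ) ⧸ C₂)) ∪
          (Set.range fun j : Fin l' =>
            ((Pi.single (Fin.natAdd l j) 1 : Fin (l + l') → ℤ) : (Fin (l + l') → ℤ) ⧸ C₂)))) :
    C₁ = C₂ := by
  subst hRY
  have hinj : Function.Injective fun k => (signedBasis l l' k : (Fin (l + l') → ℤ) ⧸ ρ.ker) := by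
    refine Function.Injective.of_comp (f := kerLift ρ) ?_
    rw [← comp_signedBasis hρ] at hdist
    exact hdist
  have hfix := addEquiv_mk_eq_mk_of_image_range_subset hinj hC₁ hC₂ φ hπ
    (by rw [range_mk_signedBasis, range_mk_signedBasis, hE])
  refine AddSubgroup.eq_of_addEquiv_comp_mk' φ ?_
  ext k
  induction k using Fin.addCases with
  | left i => exact hfix (.inl i)
  | right j => exact hfix (.inr (.inr j))
end

section
/- Let p be a prime and k, n positive integers. For every subgroup K of (ℤ/p^kℤ)^n there exist a natural number m ≤ n, integers β_1, …, β_m with k ≥ β_1 ≥ β_2 ≥ ⋯ ≥ β_m ≥ 1, and an invertible matrix Q ∈ GL(n, ℤ/p^kℤ) such that K is generated, as a subgroup of (ℤ/p^kℤ)^n, by the m vectors p^{k−β_1}·Q_1, …, p^{k−β_m}·Q_m, where Q_i denotes the i-th row of Q. -/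
/-!
Lift `K` to the lattice `L ⊆ ℤⁿ` of all integer vectors reducing into it. A Smith normal form of
`L` gives a basis `b` of `ℤⁿ` and integers `aᵢ` with `L` spanned by the `aᵢ bᵢ`; reducing modulo
`p ^ k`, the `bᵢ` become the rows of an invertible matrix and `K` is generated by the multiples
`aᵢ Qᵢ`. Each `aᵢ` is a unit times `p ^ vᵢ` in `ZMod (p ^ k)`; the units are absorbed into the rows,
the rows are sorted by increasing `vᵢ`, and those with `vᵢ ≥ k` are dropped since they vanish.
Then `βᵢ = k - vᵢ`.
-/

open Finset Matrix

lemma ZMod.natCast_self_pow (p k : ℕ) : (p : ZMod (p ^ k)) ^ k = 0 := by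
  exact_mod_cast ZMod.natCast_self (p ^ k)

lemma ZMod.exists_eq_pow_mul_isUnit {p : ℕ} (hp : p.Prime) (k : ℕ) (x : ZMod (p ^ k)) :
    ∃ (v : ℕ) (u : ZMod (p ^ k)), IsUnit u ∧ x = p ^ v * u := by
  have : NeZero (p ^ k) := ⟨pow_ne_zero k hp.ne_zero⟩
  rcases eq_or_ne x.val 0 with hx | hx
  · refine ⟨k, 1, isUnit_one, ?_⟩
    rw [(ZMod.val_eq_zero x).1 hx, mul_one]
    exact (ZMod.natCast_self_pow p k).symm
  · obtain ⟨v, b, hb, hxb⟩ := Nat.exists_eq_pow_mul_and_not_dvd hx p hp.ne_one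
    have hbp : b.Coprime (p ^ k) := (hp.coprime_iff_not_dvd.2 hb).symm.pow_right k
    refine ⟨v, b, (ZMod.isUnit_iff_coprime b _).2 hbp, ?_⟩
    rw [← ZMod.natCast_zmod_val x, hxb]
    push_cast
    rfl

lemma Module.Basis.isUnit_matrix_of {R ι : Type*} [CommRing R] [Fintype ι] [DecidableEq ι]
    (b : Basis ι R (ι → R)) : IsUnit (Matrix.of b) := by
  let := (Pi.basisFun R ι).invertibleToMatrix b
  have h := isUnit_of_invertible ((Pi.basisFun R ι).toMatrix b)
  rw [Basis.coePiBasisFun.toMatrix_eq_transpose] at h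
  exact (isUnit_transpose (of b)).1 h

lemma Matrix.isUnit_diagonal_mul {R ι : Type*} [CommRing R] [Fintype ι] [DecidableEq ι]
    {d : ι → R} (hd : ∀ i, IsUnit (d i)) {Q : Matrix ι ι R} (hQ : IsUnit Q) :
    IsUnit (diagonal d * Q) :=
  (isUnit_diagonal.2 (Pi.isUnit_iff.2 hd)).mul hQ

lemma AddSubgroup.closure_range_extend_smul {R V α ι : Type*} [Semiring R] [AddCommGroup V]
    [Module R V] (f : α ↪ ι) (a : α → R) (w : ι → V) :
    closure (Set.range fun j => Function.extend f a 0 j • w j) =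
      closure (Set.range fun i => a i • w (f i)) := by
  refine le_antisymm ((closure_le _).2 (Set.range_subset_iff.2 fun j => ?_))
    ((closure_le _).2 (Set.range_subset_iff.2 fun i => subset_closure ⟨f i, ?_⟩))
  · by_cases hj : ∃ i, f i = j
    · obtain ⟨i, rfl⟩ := hj
      rw [f.injective.extend_apply]
      exact subset_closure ⟨i, rfl⟩
    · rw [Function.extend_apply' _ _ _ hj, Pi.zero_apply, zero_smul]
      exact zero_mem _
  · simp only [f.injective.extend_apply]

lemma AddSubgroup.exists_eq_closure_smul_rows {ι : Type*} [Fintype ι] [DecidableEq ι] {N : ℕ}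
    (K : AddSubgroup (ι → ZMod N)) :
    ∃ (c : ι → ZMod N) (Q : Matrix ι ι (ZMod N)), IsUnit Q ∧
      K = closure (Set.range fun i => c i • Q i) := by
  let π : (ι → ℤ) →+ (ι → ZMod N) := (Int.castAddHom (ZMod N)).compLeft ι
  have hπ : Function.Surjective π := ZMod.intCast_surjective.comp_left
  set L := AddSubgroup.toIntSubmodule (K.comap π)
  obtain ⟨r, snf⟩ := L.smithNormalForm (Pi.basisFun ℤ ι)
  have hL : L.toAddSubgroup = closure (Set.range fun i => snf.a i • snf.bM (snf.f i)) := by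
    rw [← Submodule.span_int_eq_addSubgroupClosure, ← funext snf.snf]
    change _ = (Submodule.span ℤ (Set.range (L.subtype ∘ snf.bN))).toAddSubgroup
    rw [Set.range_comp, Submodule.span_image, snf.bN.span_eq, Submodule.map_subtype_top]
  have hK : K = closure (Set.range fun i => (snf.a i : ZMod N) • π (snf.bM (snf.f i))) := by
    rw [← map_comap_eq_self_of_surjective hπ K]
    change L.toAddSubgroup.map π = _
    rw [hL, AddMonoidHom.map_closure, ← Set.range_comp]
    congr 2
    funext i
    rw [Function.comp_apply, map_zsmul, Int.cast_smul_eq_zsmul]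
  refine ⟨Function.extend snf.f (fun i => (snf.a i : ZMod N)) 0,
    (Int.castRingHom (ZMod N)).mapMatrix (of snf.bM), snf.bM.isUnit_matrix_of.map _, ?_⟩
  have hrow (j : ι) : (Int.castRingHom (ZMod N)).mapMatrix (of snf.bM) j = π (snf.bM j) := rfl
  simp only [hrow]
  rw [hK, closure_range_extend_smul]

lemma Fin.lt_card_iff_mem_of_isLowerSet {N : ℕ} {s : Finset (Fin N)}
    (hs : IsLowerSet (s : Set (Fin N))) (i : Fin N) : (i : ℕ) < #s ↔ i ∈ s := by
  constructor
  · intro hi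
    by_contra h
    have : #s ≤ #(Iio i) := card_le_card fun j hj =>
      mem_Iio.2 (lt_of_not_ge fun hij => h (hs hij hj))
    rw [Fin.card_Iio] at this
    omega
  · intro h
    have : #(Iic i) ≤ #s := card_le_card fun j hj => hs (mem_Iic.1 hj) h
    rw [Fin.card_Iic] at this
    omega

lemma AddSubgroup.closure_range_eq_closure_range_castLE {G : Type*} [AddGroup G] {m n : ℕ}
    (hm : m ≤ n) (g : Fin n → G) (hg : ∀ j : Fin n, m ≤ (j : ℕ) → g j = 0) :
    closure (Set.range g) = closure (Set.range (g ∘ Fin.castLE hm)) := by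
  refine le_antisymm ((closure_le _).2 ?_) (closure_mono (Set.range_comp_subset_range _ _))
  rintro _ ⟨j, rfl⟩
  by_cases hj : (j : ℕ) < m
  · exact subset_closure ⟨⟨j, hj⟩, rfl⟩
  · rw [hg j (not_lt.1 hj)]
    exact zero_mem _

lemma exists_antitone_closure_pow_smul {R V : Type*} [Semiring R] [AddCommGroup V] [Module R V]
    {π : R} {k n : ℕ} (hπ : π ^ k = 0) {v : Fin n → ℕ} (hv : Monotone v) (M : Fin n → V) :
    ∃ (m : ℕ) (hm : m ≤ n) (β : Fin m → ℕ), (∀ i, β i ≤ k) ∧ (∀ i, 1 ≤ β i) ∧ Antitone β ∧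
      AddSubgroup.closure (Set.range fun j => π ^ v j • M j) =
        AddSubgroup.closure (Set.range fun i : Fin m => π ^ (k - β i) • M (Fin.castLE hm i)) := by
  classical
  set s : Finset (Fin n) := {j | v j < k}
  have hs : IsLowerSet (s : Set (Fin n)) := fun i j hji hi => by
    simp only [s, coe_filter, mem_univ, true_and, Set.mem_ofPred_eq] at hi ⊢
    exact (hv hji).trans_lt hi
  have hmem (j : Fin n) : (j : ℕ) < #s ↔ v j < k := by
    simpa [s] using Fin.lt_card_iff_mem_of_isLowerSet hs j
  have hm : #s ≤ n := (card_le_univ s).trans_eq (Fintype.card_fin n)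
  have hlt (i : Fin #s) : v (Fin.castLE hm i) < k := (hmem _).1 i.2
  refine ⟨#s, hm, fun i => k - v (Fin.castLE hm i), fun i => Nat.sub_le _ _,
    fun i => Nat.le_sub_of_add_le' (hlt i), fun i j hij => Nat.sub_le_sub_left (hv hij) k, ?_⟩
  rw [AddSubgroup.closure_range_eq_closure_range_castLE hm]
  · congr! 3 with i
    rw [Nat.sub_sub_self (hlt i).le, Function.comp_apply]
  · intro j hj
    obtain ⟨l, hl⟩ := Nat.exists_eq_add_of_le (not_lt.1 ((hmem j).not.1 (not_lt.2 hj)))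
    rw [hl, pow_add, hπ, zero_mul, zero_smul]

lemma exists_antitone_closure_pow_smul_rows {R : Type*} [CommRing R] {π : R} {k n : ℕ}
    (hπ : π ^ k = 0) (v : Fin n → ℕ) {Q : Matrix (Fin n) (Fin n) R} (hQ : IsUnit Q) :
    ∃ (m : ℕ) (hm : m ≤ n) (β : Fin m → ℕ), (∀ i, β i ≤ k) ∧ (∀ i, 1 ≤ β i) ∧ Antitone β ∧
      ∃ Q' : Matrix (Fin n) (Fin n) R, IsUnit Q' ∧
        AddSubgroup.closure (Set.range fun j => π ^ v j • Q j) =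
          AddSubgroup.closure
            (Set.range fun i : Fin m => π ^ (k - β i) • Q' (Fin.castLE hm i)) := by
  set σ := Tuple.sort v
  obtain ⟨m, hm, β, hβk, hβ1, hβ, hclosure⟩ :=
    exists_antitone_closure_pow_smul hπ (Tuple.monotone_sort v) (Q.submatrix σ id)
  refine ⟨m, hm, β, hβk, hβ1, hβ, Q.submatrix σ id,
    (isUnit_submatrix_equiv σ (Equiv.refl _)).2 hQ, ?_⟩
  rw [← hclosure, ← EquivLike.range_comp _ σ]
  rfl

theorem stmt3_general (p : ℕ) (hp : p.Prime) (k n : ℕ)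
    (K : AddSubgroup (Fin n → ZMod (p ^ k))) :
    ∃ (m : ℕ) (hm : m ≤ n) (β : Fin m → ℕ),
      (∀ i, β i ≤ k) ∧ (∀ i, 1 ≤ β i) ∧ Antitone β ∧
      ∃ Q : (Matrix (Fin n) (Fin n) (ZMod (p ^ k)))ˣ,
        K = AddSubgroup.closure (Set.range fun i : Fin m =>
          ((p : ZMod (p ^ k)) ^ (k - β i)) •
            (Q : Matrix (Fin n) (Fin n) (ZMod (p ^ k))) (Fin.castLE hm i)) := by
  obtain ⟨c, Q, hQ, hK⟩ := AddSubgroup.exists_eq_closure_smul_rows K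
  choose v u hu hc using fun j => ZMod.exists_eq_pow_mul_isUnit hp k (c j)
  obtain ⟨m, hm, β, hβk, hβ1, hβ, Q', hQ', hKQ'⟩ :=
    exists_antitone_closure_pow_smul_rows (ZMod.natCast_self_pow p k) v
      (isUnit_diagonal_mul hu hQ)
  refine ⟨m, hm, β, hβk, hβ1, hβ, hQ'.unit, ?_⟩
  rw [IsUnit.unit_spec, ← hKQ', hK]
  congr! 3 with j
  ext l
  simp [hc, diagonal_mul, mul_assoc]

theorem stmt3 (p : ℕ) (hp : p.Prime) (k n : ℕ) (hk : 0 < k) (hn : 0 < n)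
    (K : AddSubgroup (Fin n → ZMod (p ^ k))) :
    ∃ (m : ℕ) (hm : m ≤ n) (β : Fin m → ℕ),
      (∀ i, β i ≤ k) ∧ (∀ i, 1 ≤ β i) ∧ Antitone β ∧
      ∃ Q : (Matrix (Fin n) (Fin n) (ZMod (p ^ k)))ˣ,
        K = AddSubgroup.closure (Set.range fun i : Fin m =>
          ((p : ZMod (p ^ k)) ^ (k - β i)) •
            (Q : Matrix (Fin n) (Fin n) (ZMod (p ^ k))) (Fin.castLE hm i)) :=
  stmt3_general p hp k n K
end

section
/- Let p be a prime, k, n positive integers, m ≤ n a natural number, and β_1 ≥ β_2 ≥ ⋯ ≥ β_m integers with k ≥ β_1 and β_m ≥ 1. If K is a subgroup of (ℤ/p^kℤ)^n that is isomorphic to ℤ/p^{β_1}ℤ × ⋯ × ℤ/p^{β_m}ℤ, then the quotient group (ℤ/p^kℤ)^n / K is isomorphic to (ℤ/p^kℤ)^{n−m} × ℤ/p^{k−β_m}ℤ × ⋯ × ℤ/p^{k−β_1}ℤ. -/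
/-!
A finite abelian `p`-group is isomorphic to some `∏ ZMod (p ^ cᵢ)`, and such a product is
determined by the orders `|A[p ^ j]| = p ^ ∑ min cᵢ j` of its `p ^ j`-torsion subgroups. For
`G = (ℤ/p^k)ⁿ` and `Q = G/K`, counting `{x | p ^ j • x ∈ K}` in two ways gives
`|Q[p ^ j]| * |K| = |G[p ^ j]| * |K ⊓ p ^ j • G|`, and `p ^ j • G = G[p ^ (k - j)]`, so these orders
depend only on the isomorphism type of `K`. They agree with those of the claimed quotient.
-/

open Finset

section TorsionCard

variable {A B : Type*} [AddCommGroup A] [AddCommGroup B]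

theorem AddEquiv.card_ker_nsmul_eq (e : A ≃+ B) (t : ℕ) :
    Nat.card (nsmulAddMonoidHom (α := A) t).ker = Nat.card (nsmulAddMonoidHom (α := B) t).ker :=
  Nat.card_congr <| e.toEquiv.subtypeEquiv fun x => by
    simp [AddMonoidHom.mem_ker, ← map_nsmul]

theorem card_ker_nsmul_pi {ι : Type*} [Fintype ι] (A : ι → Type*) [∀ i, AddCommGroup (A i)]
    (t : ℕ) :
    Nat.card (nsmulAddMonoidHom (α := Π i, A i) t).ker =
      ∏ i, Nat.card (nsmulAddMonoidHom (α := A i) t).ker := by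
  rw [← Nat.card_pi]
  exact Nat.card_congr <| (Equiv.subtypeEquivRight fun x => by
    simp [AddMonoidHom.mem_ker, funext_iff]).trans Equiv.subtypePiEquivPi

theorem card_ker_nsmul_pi_zmod_pow {ι : Type*} [Fintype ι] {p : ℕ} (hp : p ≠ 0) (c : ι → ℕ)
    (j : ℕ) :
    Nat.card (nsmulAddMonoidHom (α := Π i, ZMod (p ^ c i)) (p ^ j)).ker =
      p ^ ∑ i, min (c i) j := by
  have : NeZero p := ⟨hp⟩
  rw [card_ker_nsmul_pi, ← prod_pow_eq_pow_sum]
  refine prod_congr rfl fun i _ => ?_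
  rw [IsAddCyclic.card_nsmulAddMonoidHom_ker, Nat.card_zmod]
  rcases le_total (c i) j with h | h
  · rw [min_eq_left h, Nat.gcd_eq_left (pow_dvd_pow p h)]
  · rw [min_eq_right h, Nat.gcd_eq_right (pow_dvd_pow p h)]

theorem card_inf_ker_nsmul (K : AddSubgroup A) (t : ℕ) :
    Nat.card (K ⊓ (nsmulAddMonoidHom t).ker : AddSubgroup A) =
      Nat.card (nsmulAddMonoidHom (α := K) t).ker :=
  Nat.card_congr <| (Equiv.subtypeSubtypeEquivSubtypeInter (· ∈ K) _).symm.trans <|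
    Equiv.subtypeEquivRight fun x => by simp [AddMonoidHom.mem_ker, Subtype.ext_iff]

theorem AddSubgroup.card_comap [Finite A] (f : A →+ B) (H : AddSubgroup B) :
    Nat.card (H.comap f) = Nat.card f.ker * Nat.card (H ⊓ f.range : AddSubgroup B) := by
  have hker : f.ker ≤ H.comap f := fun x hx => by simp_all [AddMonoidHom.mem_ker]
  rw [← (f.domRestrict (H.comap f)).ker.card_mul_index, AddSubgroup.index_ker,
    AddMonoidHom.domRestrict_range, AddSubgroup.map_comap_eq, inf_comm,
    AddMonoidHom.ker_domRestrict]
  congr 1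
  exact Nat.card_congr (AddSubgroup.addSubgroupOfEquivOfLe hker).toEquiv

theorem card_ker_nsmul_quotient_mul_card [Finite A] (K : AddSubgroup A) (t : ℕ) :
    Nat.card (nsmulAddMonoidHom (α := A ⧸ K) t).ker * Nat.card K =
      Nat.card (nsmulAddMonoidHom (α := A) t).ker *
        Nat.card (K ⊓ (nsmulAddMonoidHom t).range : AddSubgroup A) := by
  have hcomap : (nsmulAddMonoidHom (α := A ⧸ K) t).ker.comap (QuotientAddGroup.mk' K) =
      K.comap (nsmulAddMonoidHom t) := by
    ext x
    simp [AddMonoidHom.mem_ker, ← QuotientAddGroup.mk_nsmul]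
  rw [← AddSubgroup.card_comap, ← hcomap, AddSubgroup.card_comap, QuotientAddGroup.ker_mk',
    QuotientAddGroup.range_mk', inf_top_eq, mul_comm]

end TorsionCard

theorem range_nsmul_pow_eq_ker_nsmul_pow {ι : Type*} [Fintype ι] {p : ℕ} (hp : p ≠ 0)
    (k j : ℕ) :
    (nsmulAddMonoidHom (α := ι → ZMod (p ^ k)) (p ^ j)).range =
      (nsmulAddMonoidHom (p ^ (k - j))).ker := by
  have : NeZero (p ^ k) := ⟨pow_ne_zero k hp⟩
  refine AddSubgroup.eq_of_le_of_card_ge ?_ ?_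
  · rintro _ ⟨y, rfl⟩
    obtain ⟨r, hr⟩ : p ^ k ∣ p ^ (k - j) * p ^ j := by
      rw [← pow_add]
      exact pow_dvd_pow p (by omega)
    have hy : p ^ k • y = 0 := by ext i; simp [nsmul_eq_mul]
    rw [AddMonoidHom.mem_ker, nsmulAddMonoidHom_apply, nsmulAddMonoidHom_apply, smul_smul, hr,
      mul_nsmul, hy, nsmul_zero]
  · have hcard := (nsmulAddMonoidHom (α := ι → ZMod (p ^ k)) (p ^ j)).ker.card_mul_index
    rw [AddSubgroup.index_ker, card_ker_nsmul_pi_zmod_pow hp (fun _ => k), Nat.card_pi] at hcard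
    rw [card_ker_nsmul_pi_zmod_pow hp (fun _ => k)]
    simp only [Nat.card_zmod, prod_pow_eq_pow_sum, sum_const, card_univ, smul_eq_mul]
      at hcard ⊢
    refine le_of_eq <| Nat.eq_of_mul_eq_mul_left
      (pow_pos (Nat.pos_of_ne_zero hp) (Fintype.card ι * min k j)) ?_
    rw [hcard, ← pow_add, ← mul_add]
    congr 2
    omega

theorem card_ker_nsmul_pow_quotient_mul {ι κ : Type*} [Fintype ι] [Fintype κ] {p : ℕ}
    (hp : p ≠ 0) (k j : ℕ) (β : κ → ℕ) (K : AddSubgroup (ι → ZMod (p ^ k)))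
    (e : K ≃+ Π i, ZMod (p ^ β i)) :
    Nat.card (nsmulAddMonoidHom (α := (ι → ZMod (p ^ k)) ⧸ K) (p ^ j)).ker * p ^ ∑ i, β i =
      p ^ (Fintype.card ι * min k j + ∑ i, min (β i) (k - j)) := by
  have : NeZero (p ^ k) := ⟨pow_ne_zero k hp⟩
  have hK : Nat.card K = p ^ ∑ i, β i := by
    rw [Nat.card_congr e.toEquiv, Nat.card_pi]
    simp [prod_pow_eq_pow_sum]
  rw [← hK, card_ker_nsmul_quotient_mul_card, range_nsmul_pow_eq_ker_nsmul_pow hp,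
    card_inf_ker_nsmul, e.card_ker_nsmul_eq, card_ker_nsmul_pi_zmod_pow hp β,
    card_ker_nsmul_pi_zmod_pow hp (fun _ => k), pow_add]
  simp

theorem AddCommGroup.exists_addEquiv_pi_zmod_pow {p : ℕ} (hp : p.Prime) (A : Type*)
    [AddCommGroup A] [Finite A] {s : ℕ} (hA : Nat.card A ∣ p ^ s) :
    ∃ (ι : Type) (_ : Fintype ι) (c : ι → ℕ), Nonempty (A ≃+ Π i, ZMod (p ^ c i)) := by
  obtain ⟨ι, hι, q, -, e, ⟨E⟩⟩ := AddCommGroup.equiv_directSum_zmod_of_finite A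
  let E' : A ≃+ Π i, ZMod (q i ^ e i) := E.trans (DirectSum.addEquivProd _)
  have hcard : Nat.card A = ∏ i, q i ^ e i := by
    simp [Nat.card_congr E'.toEquiv, Nat.card_pi]
  have hpow : ∀ i, ∃ c ≤ s, q i ^ e i = p ^ c := fun i =>
    (Nat.dvd_prime_pow hp).mp <| (dvd_prod_of_mem _ (mem_univ i)).trans (hcard ▸ hA)
  choose c _ hc using hpow
  exact ⟨ι, hι, c, ⟨E'.trans (RingEquiv.piCongrRight fun i =>
    ZMod.ringEquivCongr (hc i)).toAddEquiv⟩⟩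

theorem nonempty_pi_zmod_pow_addEquiv_subtype_ne_zero {ι : Type*} (p : ℕ) (c : ι → ℕ) :
    Nonempty ((Π i, ZMod (p ^ c i)) ≃+ Π i : {i // c i ≠ 0}, ZMod (p ^ c i)) := by
  classical
  have : ∀ i : {i // ¬c i ≠ 0}, Subsingleton (ZMod (p ^ c i)) := fun i => by
    rw [not_not.mp i.2, pow_zero]
    infer_instance
  have : Unique (Π i : {i // ¬c i ≠ 0}, ZMod (p ^ c i)) := uniqueOfSubsingleton 0
  exact ⟨(RingEquiv.piEquivPiSubtypeProd (fun i => c i ≠ 0) _).toAddEquiv.trans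
    AddEquiv.prodUnique⟩

section SumMin

variable {ι ι' : Type*} [Fintype ι] [Fintype ι']

theorem card_filter_lt_add_sum_min (c : ι → ℕ) (j : ℕ) :
    #{i | j < c i} + ∑ i, min (c i) j = ∑ i, min (c i) (j + 1) := by
  rw [card_filter, ← sum_add_distrib]
  refine sum_congr rfl fun i _ => ?_
  split_ifs <;> omega

theorem card_filter_eq_add_card_filter_lt (c : ι → ℕ) {v : ℕ} (hv : v ≠ 0) :
    #{i | c i = v} + #{i | v < c i} = #{i | v - 1 < c i} := by
  rw [card_filter, card_filter, card_filter, ← sum_add_distrib]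
  refine sum_congr rfl fun i _ => ?_
  split_ifs <;> omega

theorem card_filter_eq_eq_of_sum_min_eq {c : ι → ℕ} {d : ι' → ℕ}
    (h : ∀ j, ∑ i, min (c i) j = ∑ i, min (d i) j) {v : ℕ} (hv : v ≠ 0) :
    #{i | c i = v} = #{i | d i = v} := by
  have hlt : ∀ j, #{i | j < c i} = #{i | j < d i} := fun j => by
    have hc := card_filter_lt_add_sum_min c j
    have hd := card_filter_lt_add_sum_min d j
    rw [h, h] at hc
    omega
  have hc := card_filter_eq_add_card_filter_lt c hv
  have hd := card_filter_eq_add_card_filter_lt d hv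
  rw [hlt, hlt] at hc
  omega

theorem exists_equiv_of_sum_min_eq {c : ι → ℕ} {d : ι' → ℕ}
    (h : ∀ j, ∑ i, min (c i) j = ∑ i, min (d i) j) :
    ∃ σ : {i // c i ≠ 0} ≃ {i // d i ≠ 0}, ∀ x, d (σ x) = c x := by
  classical
  have hfiber : ∀ v, Fintype.card {x : {i // c i ≠ 0} // c x = v} =
      Fintype.card {y : {i // d i ≠ 0} // d y = v} := by
    intro v
    rcases eq_or_ne v 0 with rfl | hv
    · rw [Fintype.card_eq_zero_iff.mpr ⟨fun x => x.1.2 x.2⟩,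
        Fintype.card_eq_zero_iff.mpr ⟨fun y => y.1.2 y.2⟩]
    · rw [Fintype.card_congr (Equiv.subtypeSubtypeEquivSubtype (q := fun i => c i = v)
          (by intro i hi; omega)),
        Fintype.card_congr (Equiv.subtypeSubtypeEquivSubtype (q := fun i => d i = v)
          (by intro i hi; omega)),
        Fintype.card_subtype, Fintype.card_subtype]
      exact card_filter_eq_eq_of_sum_min_eq h hv
  let e v := Fintype.equivOfCardEq (hfiber v)
  exact ⟨Equiv.ofFiberEquiv e, Equiv.ofFiberEquiv_map e⟩

theorem nonempty_pi_zmod_pow_addEquiv_of_sum_min_eq (p : ℕ) {c : ι → ℕ} {d : ι' → ℕ}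
    (h : ∀ j, ∑ i, min (c i) j = ∑ i, min (d i) j) :
    Nonempty ((Π i, ZMod (p ^ c i)) ≃+ Π i, ZMod (p ^ d i)) := by
  obtain ⟨σ, hσ⟩ := exists_equiv_of_sum_min_eq h
  obtain ⟨ec⟩ := nonempty_pi_zmod_pow_addEquiv_subtype_ne_zero p c
  obtain ⟨ed⟩ := nonempty_pi_zmod_pow_addEquiv_subtype_ne_zero p d
  exact ⟨ec.trans <|
    (RingEquiv.piCongrRight fun x => ZMod.ringEquivCongr (by rw [hσ x])).toAddEquiv.trans <|
    (RingEquiv.piCongrLeft (fun y : {i // d i ≠ 0} => ZMod (p ^ d y)) σ).toAddEquiv.trans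
      ed.symm⟩

end SumMin

theorem sum_min_tsub_add_sum {κ : Type*} [Fintype κ] {k : ℕ} (j : ℕ) (β : κ → ℕ)
    (hβ : ∀ i, β i ≤ k) :
    ∑ i, min (k - β i) j + ∑ i, β i = Fintype.card κ * min k j + ∑ i, min (β i) (k - j) := by
  have hterm : ∀ i, min (k - β i) j + β i = min k j + min (β i) (k - j) := fun i => by
    have := hβ i
    omega
  rw [← sum_add_distrib, sum_congr rfl fun i _ => hterm i, sum_add_distrib, sum_const, card_univ,
    smul_eq_mul]

theorem stmt5_general (p : ℕ) (hp : p.Prime) (k n : ℕ)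
    (m : ℕ) (hm : m ≤ n) (β : Fin m → ℕ)
    (hβk : ∀ i, β i ≤ k)
    (K : AddSubgroup (Fin n → ZMod (p ^ k)))
    (hK : Nonempty (K ≃+ Π i : Fin m, ZMod (p ^ β i))) :
    Nonempty (((Fin n → ZMod (p ^ k)) ⧸ K) ≃+
      ((Fin (n - m) → ZMod (p ^ k)) × Π i : Fin m, ZMod (p ^ (k - β i.rev)))) := by
  obtain ⟨e⟩ := hK
  have : NeZero (p ^ k) := ⟨pow_ne_zero k hp.ne_zero⟩
  have hdvd : Nat.card ((Fin n → ZMod (p ^ k)) ⧸ K) ∣ p ^ (k * n) := by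
    refine Dvd.intro (Nat.card K) ?_
    rw [← AddSubgroup.card_eq_card_quotient_mul_card_addSubgroup, Nat.card_pi]
    simp [pow_mul]
  obtain ⟨ι, _, c, ⟨E⟩⟩ := AddCommGroup.exists_addEquiv_pi_zmod_pow hp _ hdvd
  let d : Fin (n - m) ⊕ Fin m → ℕ := Sum.elim (fun _ => k) fun i => k - β i.rev
  have hsum : ∀ j, ∑ i, min (c i) j = ∑ x, min (d x) j := fun j => by
    have hQ := card_ker_nsmul_pow_quotient_mul hp.ne_zero k j β K e
    rw [E.card_ker_nsmul_eq, card_ker_nsmul_pi_zmod_pow hp.ne_zero, ← pow_add,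
      Fintype.card_fin] at hQ
    have hβsum := sum_min_tsub_add_sum j β hβk
    rw [Fintype.card_fin, ← Equiv.sum_comp Fin.revPerm fun i => min (k - β i) j] at hβsum
    have hnm : (n - m) * min k j + m * min k j = n * min k j := by
      rw [← add_mul, Nat.sub_add_cancel hm]
    simp only [d, Fintype.sum_sum_type, Sum.elim_inl, Sum.elim_inr, sum_const, card_univ,
      Fintype.card_fin, smul_eq_mul, Fin.revPerm_apply] at hβsum ⊢
    linarith [Nat.pow_right_injective hp.two_le hQ]
  obtain ⟨E'⟩ := nonempty_pi_zmod_pow_addEquiv_of_sum_min_eq p hsum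
  exact ⟨E.trans <| E'.trans (LinearEquiv.sumPiEquivProdPi ℤ _ _ _).toAddEquiv⟩

theorem stmt5 (p : ℕ) (hp : p.Prime) (k n : ℕ) (hk : 0 < k) (hn : 0 < n)
    (m : ℕ) (hm : m ≤ n) (β : Fin m → ℕ)
    (hβk : ∀ i, β i ≤ k) (hβ1 : ∀ i, 1 ≤ β i) (hβ : Antitone β)
    (K : AddSubgroup (Fin n → ZMod (p ^ k)))
    (hK : Nonempty (K ≃+ Π i : Fin m, ZMod (p ^ β i))) :
    Nonempty (((Fin n → ZMod (p ^ k)) ⧸ K) ≃+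
      ((Fin (n - m) → ZMod (p ^ k)) × Π i : Fin m, ZMod (p ^ (k - β i.rev)))) :=
  stmt5_general p hp k n m hm β hβk K hK
end

section
/- Let p be a prime and let L, M, N be finite abelian groups whose orders are powers of p. Then the number of subgroups K of L such that K is isomorphic to M and L/K is isomorphic to N equals the number of subgroups K of L such that K is isomorphic to N and L/K is isomorphic to M. -/
/-!
Work with the character group `Ĝ = G →* ℂˣ` of a finite abelian group `G`. The annihilator
`H^⊥ ≤ Ĝ` of a subgroup `H` is the dual of `G ⧸ H`, and `Ĝ ⧸ H^⊥` is the dual of `H` because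
characters of `H` extend to `G`. A finite abelian group is (noncanonically) isomorphic to its dual,
so transporting `H ↦ H^⊥` along `Ĝ ≃* G` gives an injective self-map of the subgroups of `G`
exchanging the isomorphism types of subgroup and quotient. Such a map injects each of the two
sets of subgroups into the other.
-/

open MonoidHom

namespace CommGroup

section

variable {G : Type*} [CommGroup G] [Finite G] (R : Type*) [CommMonoid R]
  [HasEnoughRootsOfUnity R (Monoid.exponent G)]

theorem nonempty_ker_domRestrictHom_mulEquiv_quotient (H : Subgroup G) :
    Nonempty ((domRestrictHom H Rˣ).ker ≃* G ⧸ H) :=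
  have : HasEnoughRootsOfUnity R (Monoid.exponent (G ⧸ H)) :=
    .of_dvd R (Group.exponent_quotient_dvd H)
  ⟨(domRestrictHomKerEquiv Rˣ H).trans (monoidHom_mulEquiv_of_hasEnoughRootsOfUnity _ R).some⟩

theorem nonempty_quotient_ker_domRestrictHom_mulEquiv (H : Subgroup G) :
    Nonempty (((G →* Rˣ) ⧸ (domRestrictHom H Rˣ).ker) ≃* H) :=
  have : HasEnoughRootsOfUnity R (Monoid.exponent H) :=
    .of_dvd R (Monoid.exponent_submonoid_dvd H.toSubmonoid)
  ⟨(QuotientGroup.quotientKerEquivOfSurjective _ (domRestrict_surjective R H)).trans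
    (monoidHom_mulEquiv_of_hasEnoughRootsOfUnity H R).some⟩

end

theorem exists_injective_subgroup_swap_quotient (G : Type*) [CommGroup G] [Finite G] :
    ∃ Φ : Subgroup G → Subgroup G, Function.Injective Φ ∧
      ∀ H, Nonempty (Φ H ≃* G ⧸ H) ∧ Nonempty (G ⧸ Φ H ≃* H) := by
  have : NeZero (Monoid.exponent G) := ⟨Monoid.exponent_ne_zero_of_finite⟩
  let e := (monoidHom_mulEquiv_of_hasEnoughRootsOfUnity G ℂ).some
  let perp (H : Subgroup G) : Subgroup (G →* ℂˣ) := (domRestrictHom H ℂˣ).ker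
  refine ⟨fun H ↦ (perp H).map e.toMonoidHom, fun H₁ H₂ h ↦ ?_, fun H ↦ ⟨?_, ?_⟩⟩
  · exact (subgroupOrderIsoSubgroupMonoidHom G ℂ).injective
      (Subgroup.map_injective e.injective h)
  · exact ⟨((perp H).equivMapOfInjective _ e.injective).symm.trans
      (nonempty_ker_domRestrictHom_mulEquiv_quotient ℂ H).some⟩
  · exact ⟨(QuotientGroup.congr _ _ e rfl).symm.trans
      (nonempty_quotient_ker_domRestrictHom_mulEquiv ℂ H).some⟩

end CommGroup

theorem Subgroup.card_le_of_injective_swap_quotient {L : Type*} [CommGroup L] [Finite L]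
    (M N : Type*) [Mul M] [Mul N] {Φ : Subgroup L → Subgroup L} (hΦ : Function.Injective Φ)
    (hswap : ∀ K, Nonempty (Φ K ≃* L ⧸ K) ∧ Nonempty (L ⧸ Φ K ≃* K)) :
    Nat.card {K : Subgroup L // Nonempty (K ≃* M) ∧ Nonempty ((L ⧸ K) ≃* N)} ≤
    Nat.card {K : Subgroup L // Nonempty (K ≃* N) ∧ Nonempty ((L ⧸ K) ≃* M)} := by
  refine Nat.card_le_card_of_injective (fun K ↦ ⟨Φ K, ?_, ?_⟩)
    fun K₁ K₂ h ↦ Subtype.ext (hΦ (congrArg Subtype.val h))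
  · exact ⟨(hswap K).1.some.trans K.2.2.some⟩
  · exact ⟨(hswap K).2.some.trans K.2.1.some⟩

theorem stmt6_general (L M N : Type*)
    [CommGroup L] [CommGroup M] [CommGroup N] [Finite L] :
    Nat.card {K : Subgroup L // Nonempty (K ≃* M) ∧ Nonempty ((L ⧸ K) ≃* N)} =
    Nat.card {K : Subgroup L // Nonempty (K ≃* N) ∧ Nonempty ((L ⧸ K) ≃* M)} := by
  obtain ⟨Φ, hΦ, hswap⟩ := CommGroup.exists_injective_subgroup_swap_quotient L
  exact le_antisymm (Subgroup.card_le_of_injective_swap_quotient M N hΦ hswap)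
    (Subgroup.card_le_of_injective_swap_quotient N M hΦ hswap)

theorem stmt6 (p : ℕ) (hp : p.Prime) (L M N : Type*)
    [CommGroup L] [CommGroup M] [CommGroup N] [Finite L] [Finite M] [Finite N]
    (hL : IsPGroup p L) (hM : IsPGroup p M) (hN : IsPGroup p N) :
    Nat.card {K : Subgroup L // Nonempty (K ≃* M) ∧ Nonempty ((L ⧸ K) ≃* N)} =
    Nat.card {K : Subgroup L // Nonempty (K ≃* N) ∧ Nonempty ((L ⧸ K) ≃* M)} :=
  stmt6_general L M N
end

section
/- Let p be a prime and let L, M be finite abelian groups whose orders are powers of p. Then the number of subgroups K of L such that L/K is isomorphic to M equals the number of subgroups K of L that are isomorphic to M. -/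
/-!
Let `L^ = Hom(L, ℂˣ)` be the character group. Sending a subgroup `K ≤ L` to its annihilator
`K^⊥ ≤ L^` is a bijection between the subgroups of `L` and those of `L^`, and `K^⊥` is the
character group of `L ⧸ K`, hence isomorphic to it. So the subgroups `K` with `L ⧸ K ≅ M`
correspond to the subgroups of `L^` isomorphic to `M`, and `L^ ≅ L` carries these to the
subgroups of `L` isomorphic to `M`.
-/

open MonoidHom

namespace MulEquiv

variable {G G' : Type*} [Group G] [Group G'] (A : Type*) [Group A]

theorem card_subgroups_mulEquiv_eq (e : G ≃* G') :
    Nat.card {K : Subgroup G // Nonempty (K ≃* A)} =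
      Nat.card {K : Subgroup G' // Nonempty (K ≃* A)} :=
  Nat.card_congr <| e.mapSubgroup.toEquiv.subtypeEquiv fun K =>
    ⟨fun ⟨f⟩ => ⟨(e.subgroupMap K).symm.trans f⟩,
      fun ⟨f⟩ => ⟨(e.subgroupMap K).trans f⟩⟩

end MulEquiv

namespace CommGroup

variable {G : Type*} [CommGroup G] [Finite G] (R : Type*) [CommMonoid R]
  [HasEnoughRootsOfUnity R (Monoid.exponent G)]

theorem nonempty_subgroupOrderIsoSubgroupMonoidHom_mulEquiv_quotient (H : Subgroup G) :
    Nonempty ((subgroupOrderIsoSubgroupMonoidHom G R H).ofDual ≃* G ⧸ H) :=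
  have : HasEnoughRootsOfUnity R (Monoid.exponent (G ⧸ H)) :=
    .of_dvd R (Group.exponent_quotient_dvd H)
  ⟨(domRestrictHomKerEquiv Rˣ H).trans
    (monoidHom_mulEquiv_of_hasEnoughRootsOfUnity (G ⧸ H) R).some⟩

theorem card_subgroup_quotient_mulEquiv_eq_card_subgroup_monoidHom_mulEquiv
    (A : Type*) [Group A] :
    Nat.card {H : Subgroup G // Nonempty ((G ⧸ H) ≃* A)} =
      Nat.card {Φ : Subgroup (G →* Rˣ) // Nonempty (Φ ≃* A)} :=
  Nat.card_congr <|
    ((subgroupOrderIsoSubgroupMonoidHom G R).toEquiv.trans OrderDual.ofDual).subtypeEquiv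
      fun H =>
        let d := (nonempty_subgroupOrderIsoSubgroupMonoidHom_mulEquiv_quotient R H).some
        ⟨fun ⟨f⟩ => ⟨d.trans f⟩, fun ⟨f⟩ => ⟨d.symm.trans f⟩⟩

end CommGroup

theorem stmt7_general (L M : Type*)
    [CommGroup L] [CommGroup M] [Finite L] :
    Nat.card {K : Subgroup L // Nonempty ((L ⧸ K) ≃* M)} =
    Nat.card {K : Subgroup L // Nonempty (K ≃* M)} := by
  rw [CommGroup.card_subgroup_quotient_mulEquiv_eq_card_subgroup_monoidHom_mulEquiv ℂ]
  exact (CommGroup.monoidHom_mulEquiv_of_hasEnoughRootsOfUnity L ℂ).some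
    |>.card_subgroups_mulEquiv_eq M

theorem stmt7 (p : ℕ) (hp : p.Prime) (L M : Type*)
    [CommGroup L] [CommGroup M] [Finite L] [Finite M]
    (hL : IsPGroup p L) (hM : IsPGroup p M) :
    Nat.card {K : Subgroup L // Nonempty ((L ⧸ K) ≃* M)} =
    Nat.card {K : Subgroup L // Nonempty (K ≃* M)} :=
  stmt7_general L M
end

section
/- Let p be a prime, n a positive integer, and α_1 ≥ α_2 ≥ ⋯ ≥ α_n ≥ 1 integers. Let b ≥ 1 be an integer with b ≤ α_n, and let M be a finite abelian group with p^b · M = 0. Then the number of subgroups of ℤ/p^{α_1}ℤ × ⋯ × ℤ/p^{α_n}ℤ that are isomorphic to M equals the number of subgroups of (ℤ/p^bℤ)^n that are isomorphic to M. -/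
private noncomputable def gHom (p a c : ℕ) (hca : c ≤ a) : ZMod (p ^ c) →+ ZMod (p ^ a) :=
  ZMod.lift _ ⟨(AddMonoidHom.mulRight ((p : ZMod (p ^ a)) ^ (a - c))).comp (Int.castAddHom _), by
    simp only [AddMonoidHom.comp_apply, Int.coe_castAddHom, AddMonoidHom.mulRight_apply,
      Int.cast_natCast]
    push_cast
    rw [← pow_add]
    rw [show c + (a - c) = a by omega]
    simp [← Nat.cast_pow, ZMod.natCast_self]⟩

private lemma gHom_natCast (p a c : ℕ) (hca : c ≤ a) (m : ℕ) :
    gHom p a c hca (m : ZMod (p ^ c)) = (m : ZMod (p ^ a)) * (p : ZMod (p ^ a)) ^ (a - c) := by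
  have : ((m : ℤ) : ZMod (p ^ c)) = (m : ZMod (p ^ c)) := by push_cast; ring
  rw [← this, gHom, ZMod.lift_coe]
  simp [AddMonoidHom.mulRight_apply]

private lemma gHom_inj (p a c : ℕ) (hp : p.Prime) (hca : c ≤ a) :
    Function.Injective (gHom p a c hca) := by
  haveI : NeZero (p ^ c) := ⟨pow_ne_zero _ hp.ne_zero⟩
  rw [injective_iff_map_eq_zero]
  intro x hx
  have hxv : ((x.val : ℕ) : ZMod (p ^ c)) = x := ZMod.natCast_rightInverse x
  rw [← hxv, gHom_natCast] at hx
  rw [← Nat.cast_pow, ← Nat.cast_mul, ZMod.natCast_eq_zero_iff] at hx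
  have h1 : p ^ (a - c) * p ^ c ∣ x.val * p ^ (a - c) := by
    rwa [← pow_add, show a - c + c = a by omega]
  rw [mul_comm (p ^ (a - c))] at h1
  have h2 : p ^ c ∣ x.val :=
    (Nat.mul_dvd_mul_iff_right (pow_pos hp.pos _)).mp h1
  have h3 : x.val = 0 := Nat.eq_zero_of_dvd_of_lt h2 (ZMod.val_lt x)
  rw [← hxv, h3, Nat.cast_zero]

private lemma gHom_surj_tors (p a c : ℕ) (hp : p.Prime) (hca : c ≤ a)
    (y : ZMod (p ^ a)) (hy : p ^ c • y = 0) : ∃ x, gHom p a c hca x = y := by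
  haveI : NeZero (p ^ a) := ⟨pow_ne_zero _ hp.ne_zero⟩
  have hyv : ((y.val : ℕ) : ZMod (p ^ a)) = y := ZMod.natCast_rightInverse y
  rw [nsmul_eq_mul, ← hyv, ← Nat.cast_mul,
    ZMod.natCast_eq_zero_iff] at hy
  have h1 : p ^ (a - c) * p ^ c ∣ p ^ c * y.val := by
    rwa [← pow_add, show a - c + c = a by omega]
  rw [mul_comm (p ^ c) y.val] at h1
  have h2 : p ^ (a - c) ∣ y.val :=
    (Nat.mul_dvd_mul_iff_right (pow_pos hp.pos c)).mp h1
  obtain ⟨d, hd⟩ := h2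
  refine ⟨(d : ZMod (p ^ c)), ?_⟩
  rw [gHom_natCast, ← Nat.cast_pow, ← Nat.cast_mul, mul_comm d, ← hd, hyv]

private lemma gHom_tors (p a c : ℕ) (hca : c ≤ a) (x : ZMod (p ^ c)) :
    p ^ c • gHom p a c hca x = 0 := by
  rw [← map_nsmul]
  have : p ^ c • x = 0 := by
    rw [nsmul_eq_mul, ZMod.natCast_self, zero_mul]
  rw [this, map_zero]

theorem stmt8 (p : ℕ) (hp : p.Prime) (n : ℕ) (hn : 0 < n)
    (α : Fin n → ℕ) (hα : Antitone α) (hα1 : ∀ i, 1 ≤ α i)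
    (b : ℕ) (hb1 : 1 ≤ b) (hbα : b ≤ α ⟨n - 1, by omega⟩)
    (M : Type*) [AddCommGroup M] [Finite M] (hM : ∀ x : M, p ^ b • x = 0) :
    Nat.card {K : AddSubgroup (Π i : Fin n, ZMod (p ^ α i)) // Nonempty (K ≃+ M)} =
    Nat.card {K : AddSubgroup (Fin n → ZMod (p ^ b)) // Nonempty (K ≃+ M)} := by
  classical
  have hbi : ∀ i : Fin n, b ≤ α i := by
    intro i
    refine hbα.trans (hα ?_)
    rw [Fin.le_def]
    have := i.isLt
    simp only []
    omega
  let φ : (Fin n → ZMod (p ^ b)) →+ (Π i : Fin n, ZMod (p ^ α i)) :=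
    { toFun := fun x i => gHom p (α i) b (hbi i) (x i)
      map_zero' := by funext i; simp
      map_add' := by intro x y; funext i; simp }
  have hφ : ∀ (x : Fin n → ZMod (p ^ b)) (i : Fin n), φ x i = gHom p (α i) b (hbi i) (x i) :=
    fun _ _ => rfl
  have hinj : Function.Injective φ := by
    intro x y hxy
    funext i
    exact gHom_inj p (α i) b hp (hbi i) (congrFun hxy i)
  have hrange : ∀ (K : AddSubgroup (Π i : Fin n, ZMod (p ^ α i))),
      Nonempty (K ≃+ M) → K ≤ φ.range := by
    rintro K ⟨e⟩ x hx
    have hkill : p ^ b • x = 0 := by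
      have h1 : p ^ b • (⟨x, hx⟩ : K) = 0 := by
        have := hM (e ⟨x, hx⟩)
        rw [← map_nsmul] at this
        exact e.injective (by rw [this, map_zero])
      exact congrArg Subtype.val h1
    have hcomp : ∀ i, p ^ b • x i = 0 := by
      intro i
      exact congrFun hkill i
    choose c hc using fun i => gHom_surj_tors p (α i) b hp (hbi i) (x i) (hcomp i)
    exact ⟨c, funext hc⟩
  have e : {K : AddSubgroup (Fin n → ZMod (p ^ b)) // Nonempty (K ≃+ M)} ≃
      {K : AddSubgroup (Π i : Fin n, ZMod (p ^ α i)) // Nonempty (K ≃+ M)} :=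
    { toFun := fun K => ⟨K.1.map φ,
        K.2.map (fun f => (AddSubgroup.equivMapOfInjective K.1 φ hinj).symm.trans f)⟩
      invFun := fun K => ⟨K.1.comap φ,
        K.2.map (fun f =>
          ((AddSubgroup.equivMapOfInjective (K.1.comap φ) φ hinj).trans
            ((AddEquiv.addSubgroupCongr
              (AddSubgroup.map_comap_eq_self (hrange K.1 K.2))).trans f)))⟩
      left_inv := fun K => Subtype.ext (AddSubgroup.comap_map_eq_self_of_injective hinj K.1)
      right_inv := fun K => Subtype.ext (AddSubgroup.map_comap_eq_self (hrange K.1 K.2)) }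
  exact (Nat.card_congr e).symm
end

section
/- Let p be a prime, let n_1, n_2 be positive integers, and let a_1, a_2, s be integers with 1 ≤ s ≤ a_2 ≤ a_1. Let L = (ℤ/p^{a_1}ℤ)^{n_1} × (ℤ/p^{a_2}ℤ)^{n_2} with projections π_1, π_2 onto the two factors. Then (p − 1) times the number of cyclic subgroups K of L of order p^s such that π_1(K) has order p^s and π_2(K) has order dividing p^{s−1} equals (p^{n_1} − 1) · p^{(s−1)(n_1 + n_2 − 1)}. -/
lemma isAddCyclic_zmultiples' {G : Type*} [AddCommGroup G] (x : G) :
    IsAddCyclic (AddSubgroup.zmultiples x) := by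
  refine ⟨⟨x, AddSubgroup.mem_zmultiples x⟩, ?_⟩
  rintro ⟨y, k, rfl⟩
  exact ⟨k, Subtype.ext (by simp)⟩

open Finset in
lemma card_addOrderOf_dvd_eq' {α : Type*} [AddCommGroup α] [Fintype α] [IsAddCyclic α]
    {d : ℕ} (hd0 : d ≠ 0) (hd : d ∣ Fintype.card α) :
    Nat.card {a : α // addOrderOf a ∣ d} = d := by
  classical
  rw [Nat.card_eq_fintype_card, Fintype.card_subtype]
  have h1 : (univ.filter fun a : α => addOrderOf a ∣ d)
      = d.divisors.biUnion (fun e => univ.filter fun a : α => addOrderOf a = e) := by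
    ext a
    simp only [mem_filter, mem_univ, true_and, mem_biUnion, Nat.mem_divisors]
    constructor
    · exact fun h => ⟨addOrderOf a, ⟨h, hd0⟩, rfl⟩
    · rintro ⟨e, ⟨he, -⟩, rfl⟩; exact he
  rw [h1, card_biUnion]
  · calc ∑ e ∈ d.divisors, (univ.filter fun a : α => addOrderOf a = e).card
        = ∑ e ∈ d.divisors, e.totient := by
          refine Finset.sum_congr rfl fun e he => ?_
          have := IsAddCyclic.card_addOrderOf_eq_totient (α := α)
            ((Nat.mem_divisors.mp he).1.trans hd)
          convert this using 2
      _ = d := Nat.sum_totient d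
  · intro e he f hf hef
    simp only [disjoint_left, mem_filter, mem_univ, true_and]
    rintro a rfl h
    exact hef h



lemma card_pi_zmod_dvd' (p a s n : ℕ) (hp : p.Prime) (hsa : s ≤ a) :
    Nat.card {y : Fin n → ZMod (p ^ a) // addOrderOf y ∣ p ^ s} = p ^ (s * n) := by
  haveI : NeZero (p ^ a) := ⟨pow_ne_zero _ hp.ne_zero⟩
  have key : ∀ y : Fin n → ZMod (p ^ a),
      (addOrderOf y ∣ p ^ s) ↔ ∀ i, addOrderOf (y i) ∣ p ^ s := by
    intro y
    simp only [addOrderOf_dvd_iff_nsmul_eq_zero, funext_iff, Pi.smul_apply, Pi.zero_apply]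
  rw [Nat.card_congr ((Equiv.subtypeEquivRight key).trans (Equiv.subtypePiEquivPi (p := fun _ b => addOrderOf b ∣ p ^ s))),
    Nat.card_pi]
  have hone : Nat.card {x : ZMod (p ^ a) // addOrderOf x ∣ p ^ s} = p ^ s := by
    refine card_addOrderOf_dvd_eq' (pow_ne_zero _ hp.ne_zero) ?_
    rw [ZMod.card]; exact pow_dvd_pow p hsa
  simp only [hone, Finset.prod_const, Finset.card_univ, Fintype.card_fin, pow_mul]

lemma card_pi_zmod_eq' (p a s n : ℕ) (hp : p.Prime) (hs : 1 ≤ s) (hsa : s ≤ a) :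
    Nat.card {y : Fin n → ZMod (p ^ a) // addOrderOf y = p ^ s}
      = p ^ (s * n) - p ^ ((s - 1) * n) := by
  haveI : NeZero (p ^ a) := ⟨pow_ne_zero _ hp.ne_zero⟩
  classical
  have hsplit : ∀ y : Fin n → ZMod (p ^ a),
      addOrderOf y ∣ p ^ s ↔ (addOrderOf y = p ^ s ∨ addOrderOf y ∣ p ^ (s - 1)) := by
    intro y
    constructor
    · intro h
      obtain ⟨i, hi, hy⟩ := (Nat.dvd_prime_pow hp).mp h
      rcases eq_or_lt_of_le hi with rfl | hlt
      · exact Or.inl hy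
      · exact Or.inr (hy ▸ pow_dvd_pow p (by omega))
    · rintro (h | h)
      · exact h ▸ dvd_rfl
      · exact h.trans (pow_dvd_pow p (by omega))
  have hD := card_pi_zmod_dvd' p a s n hp hsa
  have hF := card_pi_zmod_dvd' p a (s-1) n hp (by omega)
  have hdisj : Disjoint
      (Finset.univ.filter fun y : Fin n → ZMod (p^a) => addOrderOf y = p ^ s)
      (Finset.univ.filter fun y : Fin n → ZMod (p^a) => addOrderOf y ∣ p ^ (s - 1)) := by
    rw [Finset.disjoint_left]
    rintro y hy hy'
    simp only [Finset.mem_filter, Finset.mem_univ, true_and] at hy hy'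
    have h2 := hy ▸ hy'
    have hle := (Nat.pow_dvd_pow_iff_le_right hp.one_lt).mp h2
    omega
  have hunion : (Finset.univ.filter fun y : Fin n → ZMod (p^a) => addOrderOf y ∣ p ^ s)
      = (Finset.univ.filter fun y : Fin n → ZMod (p^a) => addOrderOf y = p ^ s)
        ∪ (Finset.univ.filter fun y : Fin n → ZMod (p^a) => addOrderOf y ∣ p ^ (s-1)) := by
    rw [← Finset.filter_or]; exact Finset.filter_congr fun y _ => (hsplit y)
  rw [Nat.card_eq_fintype_card, Fintype.card_subtype] at hD hF ⊢
  rw [hunion, Finset.card_union_of_disjoint hdisj] at hD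
  omega



open AddSubgroup in
lemma key_count' {G₁ G₂ : Type*} [AddCommGroup G₁] [AddCommGroup G₂] [Finite G₁] [Finite G₂]
    (m r : ℕ) (hm : m ≠ 0) (hrm : r ∣ m) :
    Nat.card {x : G₁ × G₂ // addOrderOf x.1 = m ∧ addOrderOf x.2 ∣ r}
      = Nat.card {K : AddSubgroup (G₁ × G₂) // IsAddCyclic K ∧ Nat.card K = m ∧
          Nat.card (K.map (AddMonoidHom.fst G₁ G₂)) = m ∧
          Nat.card (K.map (AddMonoidHom.snd G₁ G₂)) ∣ r} * m.totient := by
  classical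
  set S := {x : G₁ × G₂ // addOrderOf x.1 = m ∧ addOrderOf x.2 ∣ r} with hS
  set T := {K : AddSubgroup (G₁ × G₂) // IsAddCyclic K ∧ Nat.card K = m ∧
          Nat.card (K.map (AddMonoidHom.fst G₁ G₂)) = m ∧
          Nat.card (K.map (AddMonoidHom.snd G₁ G₂)) ∣ r} with hT
  -- the order of any x satisfying the conditions is m
  have hordx : ∀ x : G₁ × G₂, addOrderOf x.1 = m → addOrderOf x.2 ∣ r → addOrderOf x = m := by
    intro x h1 h2
    rw [Prod.addOrderOf, h1]
    exact Nat.dvd_antisymm (Nat.lcm_dvd dvd_rfl (h2.trans hrm)) (Nat.dvd_lcm_left _ _)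
  let f : S → T := fun x => ⟨zmultiples x.val,
    isAddCyclic_zmultiples' _,
    by rw [Nat.card_zmultiples]; exact hordx x.val x.2.1 x.2.2,
    by rw [AddMonoidHom.map_zmultiples, Nat.card_zmultiples]; exact x.2.1,
    by rw [AddMonoidHom.map_zmultiples, Nat.card_zmultiples]; exact x.2.2⟩
  have hfval : ∀ x : S, (f x).val = zmultiples x.val := fun _ => rfl
  -- each fiber has cardinality totient m
  have fiber_card : ∀ K : T, Nat.card {x : S // f x = K} = m.totient := by
    rintro ⟨Kv, hc, hcard, h1, h2⟩
    have hSfromgen : ∀ x : G₁ × G₂, zmultiples x = Kv →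
        addOrderOf x.1 = m ∧ addOrderOf x.2 ∣ r := by
      intro x hz
      rw [← hz, AddMonoidHom.map_zmultiples, Nat.card_zmultiples] at h1 h2
      exact ⟨h1, h2⟩
    have hordm : ∀ x : S, addOrderOf x.val = m := fun x => hordx x.val x.2.1 x.2.2
    let g : {x : S // f x = ⟨Kv, hc, hcard, h1, h2⟩} → {a : Kv // addOrderOf (a : G₁ × G₂) = m} :=
      fun x => ⟨⟨x.val.val, by
          have hz : zmultiples x.val.val = Kv := congrArg Subtype.val x.prop
          exact le_of_eq hz (mem_zmultiples _)⟩, hordm x.val⟩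
    have hgbij : Function.Bijective g := by
      constructor
      · intro x y h
        exact Subtype.ext (Subtype.ext (congrArg (fun z => z.val.val) h))
      · rintro ⟨a, ha⟩
        have ha' : addOrderOf a.val = m := ha
        have hz : zmultiples (a.val) = Kv := by
          apply AddSubgroup.eq_of_le_of_card_ge (zmultiples_le.mpr a.prop)
          rw [Nat.card_zmultiples, ha', hcard]
        obtain ⟨hx1, hx2⟩ := hSfromgen a.val hz
        exact ⟨⟨⟨a.val, hx1, hx2⟩, Subtype.ext hz⟩, Subtype.ext (Subtype.ext rfl)⟩
    rw [Nat.card_congr (Equiv.ofBijective g hgbij)]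
    -- count generators in the cyclic group Kv
    haveI : IsAddCyclic Kv := hc
    haveI : Fintype Kv := Fintype.ofFinite _
    have hdvd : m ∣ Fintype.card Kv := by
      rw [← Nat.card_eq_fintype_card, hcard]
    have := IsAddCyclic.card_addOrderOf_eq_totient (α := Kv) (d := m) hdvd
    rw [Nat.card_eq_fintype_card, Fintype.card_subtype]
    rw [← this]
    congr 1
    ext a
    simp [AddSubgroup.addOrderOf_coe]
  -- fibers are nonempty, so T is finite
  haveI : Finite S := by infer_instance
  have hsurj : Function.Surjective f := by
    intro K
    have h0 : Nat.card {x : S // f x = K} ≠ 0 := by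
      rw [fiber_card K]
      exact (Nat.totient_pos.mpr (Nat.pos_of_ne_zero hm)).ne'
    obtain ⟨x, hx⟩ := (Nat.card_ne_zero.mp h0).1
    exact ⟨x, hx⟩
  haveI : Finite T := Finite.of_surjective f hsurj
  haveI : Fintype T := Fintype.ofFinite _
  haveI : Fintype S := Fintype.ofFinite _
  letI : ∀ K : T, Fintype {x : S // f x = K} := fun K => Fintype.ofFinite _
  calc Nat.card S = Nat.card (Σ K : T, {x : S // f x = K}) :=
        Nat.card_congr (Equiv.sigmaFiberEquiv f).symm
    _ = ∑ K : T, Nat.card {x : S // f x = K} := by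
        rw [Nat.card_eq_fintype_card, Fintype.card_sigma]
        exact Finset.sum_congr rfl fun K _ => (Nat.card_eq_fintype_card).symm
    _ = ∑ K : T, m.totient := Finset.sum_congr rfl fun K _ => fiber_card K
    _ = Nat.card T * m.totient := by
        rw [Finset.sum_const, Finset.card_univ, smul_eq_mul, Nat.card_eq_fintype_card]


theorem stmt10 (p : ℕ) (hp : p.Prime) (n₁ n₂ : ℕ) (hn₁ : 0 < n₁) (hn₂ : 0 < n₂)
    (a₁ a₂ s : ℕ) (hs : 1 ≤ s) (hsa₂ : s ≤ a₂) (ha : a₂ ≤ a₁) :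
    (p - 1) * Nat.card {K : AddSubgroup
        ((Fin n₁ → ZMod (p ^ a₁)) × (Fin n₂ → ZMod (p ^ a₂))) //
        IsAddCyclic K ∧ Nat.card K = p ^ s ∧
        Nat.card (K.map (AddMonoidHom.fst (Fin n₁ → ZMod (p ^ a₁)) (Fin n₂ → ZMod (p ^ a₂)))) = p ^ s ∧
        Nat.card (K.map (AddMonoidHom.snd (Fin n₁ → ZMod (p ^ a₁)) (Fin n₂ → ZMod (p ^ a₂)))) ∣ p ^ (s - 1)} =
      (p ^ n₁ - 1) * p ^ ((s - 1) * (n₁ + n₂ - 1)) := by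
  haveI : NeZero (p ^ a₁) := ⟨pow_ne_zero _ hp.ne_zero⟩
  haveI : NeZero (p ^ a₂) := ⟨pow_ne_zero _ hp.ne_zero⟩
  obtain ⟨t, rfl⟩ : ∃ t, s = t + 1 := ⟨s - 1, by omega⟩
  obtain ⟨u, hu⟩ : ∃ u, n₁ + n₂ = u + 1 := ⟨n₁ + n₂ - 1, by omega⟩
  have hkey := key_count' (G₁ := Fin n₁ → ZMod (p ^ a₁)) (G₂ := Fin n₂ → ZMod (p ^ a₂))
    (p ^ (t + 1)) (p ^ t) (pow_ne_zero _ hp.ne_zero) (pow_dvd_pow p (by omega))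
  have hprod : Nat.card {x : (Fin n₁ → ZMod (p ^ a₁)) × (Fin n₂ → ZMod (p ^ a₂)) //
      addOrderOf x.1 = p ^ (t + 1) ∧ addOrderOf x.2 ∣ p ^ t} =
      (p ^ ((t + 1) * n₁) - p ^ (t * n₁)) * p ^ (t * n₂) := by
    rw [Nat.card_congr (Equiv.subtypeProdEquivProd
      (p := fun y : Fin n₁ → ZMod (p ^ a₁) => addOrderOf y = p ^ (t + 1))
      (q := fun z : Fin n₂ → ZMod (p ^ a₂) => addOrderOf z ∣ p ^ t)), Nat.card_prod,
      card_pi_zmod_eq' p a₁ (t + 1) n₁ hp (by omega) (by omega),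
      card_pi_zmod_dvd' p a₂ t n₂ hp (by omega)]
    simp
  rw [hprod] at hkey
  have htot : (p ^ (t + 1)).totient = p ^ t * (p - 1) := by
    rw [Nat.totient_prime_pow hp (by omega)]
    simp
  rw [htot] at hkey
  simp only [Nat.add_sub_cancel]
  rw [show n₁ + n₂ - 1 = u by omega]
  have e1 : (p ^ n₁ - 1) * p ^ (t * u) * p ^ t
      = (p ^ ((t + 1) * n₁) - p ^ (t * n₁)) * p ^ (t * n₂) := by
    have h1 : p ^ ((t + 1) * n₁) - p ^ (t * n₁) = p ^ (t * n₁) * (p ^ n₁ - 1) := by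
      rw [Nat.mul_sub, mul_one, ← pow_add]
      congr 2
      ring
    have h2 : t * n₁ + t * n₂ = t * u + t := by
      calc t * n₁ + t * n₂ = t * (n₁ + n₂) := by ring
        _ = t * (u + 1) := by rw [hu]
        _ = t * u + t := by ring
    rw [h1, mul_comm (p ^ (t * n₁)) _, mul_assoc, mul_assoc, ← pow_add, ← pow_add, h2]
  apply Nat.eq_of_mul_eq_mul_right (show 0 < p ^ t from pow_pos hp.pos t)
  calc (p - 1) * Nat.card {K : AddSubgroup
        ((Fin n₁ → ZMod (p ^ a₁)) × (Fin n₂ → ZMod (p ^ a₂))) //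
        IsAddCyclic K ∧ Nat.card K = p ^ (t + 1) ∧
        Nat.card (K.map (AddMonoidHom.fst (Fin n₁ → ZMod (p ^ a₁)) (Fin n₂ → ZMod (p ^ a₂)))) = p ^ (t + 1) ∧
        Nat.card (K.map (AddMonoidHom.snd (Fin n₁ → ZMod (p ^ a₁)) (Fin n₂ → ZMod (p ^ a₂)))) ∣ p ^ t} * p ^ t
      = Nat.card {K : AddSubgroup
        ((Fin n₁ → ZMod (p ^ a₁)) × (Fin n₂ → ZMod (p ^ a₂))) //
        IsAddCyclic K ∧ Nat.card K = p ^ (t + 1) ∧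
        Nat.card (K.map (AddMonoidHom.fst (Fin n₁ → ZMod (p ^ a₁)) (Fin n₂ → ZMod (p ^ a₂)))) = p ^ (t + 1) ∧
        Nat.card (K.map (AddMonoidHom.snd (Fin n₁ → ZMod (p ^ a₁)) (Fin n₂ → ZMod (p ^ a₂)))) ∣ p ^ t} * (p ^ t * (p - 1)) := by
        ring
    _ = (p ^ ((t + 1) * n₁) - p ^ (t * n₁)) * p ^ (t * n₂) := hkey.symm
    _ = (p ^ n₁ - 1) * p ^ (t * u) * p ^ t := e1.symm
end

section
/- Let p be a prime, let n_1, n_2 be positive integers, and let a_1, a_2 be integers with 1 ≤ a_2 ≤ a_1. Let L = (ℤ/p^{a_1}ℤ)^{n_1} × (ℤ/p^{a_2}ℤ)^{n_2} and let u = (u^{(1)}, u^{(2)}) ∈ L. Suppose u^{(1)} has additive order p^s and u^{(2)} has additive order p^t, where 1 ≤ s ≤ a_1, t < s, and a_1 − s ≤ a_2 − t. Then the quotient L / ⟨u⟩ of L by the cyclic subgroup generated by u is isomorphic to (ℤ/p^{a_1}ℤ)^{n_1−1} × (ℤ/p^{a_2}ℤ)^{n_2} × ℤ/p^{a_1−s}ℤ.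 -/
/-- In `ZMod (p^a)`, if `p^s * x = 0` with `s ≤ a`, then `x` is a multiple of `p^(a-s)`,
with natural-number cofactor. -/
lemma aux_pow_mul_eq_zero {p a s : ℕ} (hp : p.Prime) (hs : s ≤ a) (x : ZMod (p ^ a))
    (hx : (p : ZMod (p ^ a)) ^ s * x = 0) :
    ∃ d : ℕ, x = (p : ZMod (p ^ a)) ^ (a - s) * (d : ZMod (p ^ a)) := by
  haveI : NeZero (p ^ a) := ⟨pow_ne_zero _ hp.ne_zero⟩
  have h1 : ((p ^ s * x.val : ℕ) : ZMod (p ^ a)) = 0 := by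
    push_cast
    rw [ZMod.natCast_val, ZMod.cast_id]
    exact hx
  have h2 : p ^ a ∣ p ^ s * x.val := (ZMod.natCast_eq_zero_iff _ _).mp h1
  have h3 : p ^ (a - s) ∣ x.val := by
    have h4 : p ^ s * p ^ (a - s) ∣ p ^ s * x.val := by
      rwa [← pow_add, Nat.add_sub_cancel' hs]
    exact (Nat.mul_dvd_mul_iff_left (pow_pos hp.pos s)).mp h4
  obtain ⟨d, hd⟩ := h3
  refine ⟨d, ?_⟩
  calc x = ((x.val : ℕ) : ZMod (p ^ a)) := by rw [ZMod.natCast_val, ZMod.cast_id]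
    _ = (p : ZMod (p ^ a)) ^ (a - s) * (d : ZMod (p ^ a)) := by rw [hd]; push_cast; ring

/-- If moreover `p^(s-1) * x ≠ 0`, the cofactor can be taken to be a unit. -/
lemma aux_pow_mul_unit {p a s : ℕ} (hp : p.Prime) (hs : s ≤ a) (hs1 : 1 ≤ s)
    (x : ZMod (p ^ a)) (hx : (p : ZMod (p ^ a)) ^ s * x = 0)
    (hx2 : (p : ZMod (p ^ a)) ^ (s - 1) * x ≠ 0) :
    ∃ c : ZMod (p ^ a), IsUnit c ∧ x = (p : ZMod (p ^ a)) ^ (a - s) * c := by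
  haveI : NeZero (p ^ a) := ⟨pow_ne_zero _ hp.ne_zero⟩
  obtain ⟨d, hd⟩ := aux_pow_mul_eq_zero hp hs x hx
  refine ⟨(d : ZMod (p ^ a)), ?_, hd⟩
  have hpd : ¬ p ∣ d := by
    intro ⟨d', hd'⟩
    apply hx2
    rw [hd, hd']
    push_cast
    have h5 : (s - 1) + (a - s) + 1 = a := by omega
    have heq : (p : ZMod (p ^ a)) ^ (s - 1) * ((p : ZMod (p ^ a)) ^ (a - s) * ((p : ZMod (p ^ a)) * (d' : ZMod (p ^ a))))
        = (p : ZMod (p ^ a)) ^ a * (d' : ZMod (p ^ a)) := by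
      calc (p : ZMod (p ^ a)) ^ (s - 1) * ((p : ZMod (p ^ a)) ^ (a - s) * ((p : ZMod (p ^ a)) * (d' : ZMod (p ^ a))))
          = ((p : ZMod (p ^ a)) ^ (s - 1) * (p : ZMod (p ^ a)) ^ (a - s)) * (p : ZMod (p ^ a)) * (d' : ZMod (p ^ a)) := by ring
        _ = (p : ZMod (p ^ a)) ^ ((s - 1) + (a - s) + 1) * (d' : ZMod (p ^ a)) := by
            rw [← pow_add, ← pow_succ]
        _ = (p : ZMod (p ^ a)) ^ a * (d' : ZMod (p ^ a)) := by rw [h5]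
    rw [heq]
    have hza : (p : ZMod (p ^ a)) ^ a = 0 := by
      have := ZMod.natCast_self (p ^ a)
      push_cast at this
      exact this
    rw [hza, zero_mul]
  rw [ZMod.isUnit_iff_coprime]
  exact Nat.Coprime.pow_right a (Nat.coprime_comm.mp (hp.coprime_iff_not_dvd.mpr hpd))

/-- If the cast of `z` to `ZMod M` is zero, `z` is a multiple of `M`. -/
lemma aux_cast_eq_zero {N M : ℕ} [NeZero N] (hd : M ∣ N) (z : ZMod N)
    (h : ZMod.castHom hd (ZMod M) z = 0) :
    ∃ μ : ZMod N, z = (M : ZMod N) * μ := by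
  haveI : NeZero M := ⟨fun h0 => (NeZero.ne N) (by simpa [h0] using hd)⟩
  have h1 : ((z.val : ℕ) : ZMod M) = 0 := by
    rwa [ZMod.natCast_val, ← ZMod.castHom_apply (h := hd)]
  have h2 : M ∣ z.val := (ZMod.natCast_eq_zero_iff _ _).mp h1
  obtain ⟨d, hdd⟩ := h2
  refine ⟨(d : ZMod N), ?_⟩
  calc z = ((z.val : ℕ) : ZMod N) := by rw [ZMod.natCast_val, ZMod.cast_id]
    _ = _ := by rw [hdd]; push_cast; ring

theorem stmt13 (p : ℕ) (hp : p.Prime) (n₁ n₂ : ℕ) (hn₁ : 0 < n₁) (hn₂ : 0 < n₂)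
    (a₁ a₂ s t : ℕ) (ha₂ : 1 ≤ a₂) (ha : a₂ ≤ a₁)
    (u : (Fin n₁ → ZMod (p ^ a₁)) × (Fin n₂ → ZMod (p ^ a₂)))
    (hu₁ : addOrderOf u.1 = p ^ s) (hu₂ : addOrderOf u.2 = p ^ t)
    (hs1 : 1 ≤ s) (hsa₁ : s ≤ a₁) (hts : t < s) (hst : a₁ - s ≤ a₂ - t) :
    Nonempty ((((Fin n₁ → ZMod (p ^ a₁)) × (Fin n₂ → ZMod (p ^ a₂))) ⧸
        AddSubgroup.zmultiples u) ≃+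
      ((Fin (n₁ - 1) → ZMod (p ^ a₁)) × (Fin n₂ → ZMod (p ^ a₂)) ×
        ZMod (p ^ (a₁ - s)))) := by
  haveI hN1 : NeZero (p ^ a₁) := ⟨pow_ne_zero _ hp.ne_zero⟩
  haveI hN2 : NeZero (p ^ a₂) := ⟨pow_ne_zero _ hp.ne_zero⟩
  haveI hN3 : NeZero (p ^ (a₁ - s)) := ⟨pow_ne_zero _ hp.ne_zero⟩
  obtain ⟨m, rfl⟩ : ∃ m, n₁ = m + 1 := ⟨n₁ - 1, (Nat.succ_pred_eq_of_pos hn₁).symm⟩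
  rw [Nat.add_sub_cancel]
  -- t ≤ a₂
  have hta : t ≤ a₂ := by
    have h0 : (p ^ a₂ : ℕ) • u.2 = 0 := by
      funext k
      simp only [Pi.smul_apply, Pi.zero_apply, nsmul_eq_mul]
      push_cast
      rw [show ((p : ZMod (p ^ a₂)) ^ a₂) = ((p ^ a₂ : ℕ) : ZMod (p ^ a₂)) by push_cast; ring,
        ZMod.natCast_self, zero_mul]
    have hdvd : p ^ t ∣ p ^ a₂ := hu₂ ▸ addOrderOf_dvd_of_nsmul_eq_zero h0
    exact (Nat.pow_dvd_pow_iff_le_right hp.one_lt).mp hdvd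
  -- u.1 is killed by p^s
  have hk1 : ∀ j, (p : ZMod (p ^ a₁)) ^ s * u.1 j = 0 := by
    intro j
    have h0 : (p ^ s : ℕ) • u.1 = 0 := by rw [← hu₁]; exact addOrderOf_nsmul_eq_zero u.1
    have h1 := congrFun h0 j
    simpa only [Pi.smul_apply, Pi.zero_apply, nsmul_eq_mul, Nat.cast_pow] using h1
  -- some coordinate of u.1 is not killed by p^(s-1)
  have hk2 : ∃ i, (p : ZMod (p ^ a₁)) ^ (s - 1) * u.1 i ≠ 0 := by
    by_contra hcon
    push_neg at hcon
    have h0 : (p ^ (s - 1) : ℕ) • u.1 = 0 := by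
      funext j
      simpa only [Pi.smul_apply, Pi.zero_apply, nsmul_eq_mul, Nat.cast_pow] using hcon j
    have hdvd : p ^ s ∣ p ^ (s - 1) := hu₁ ▸ addOrderOf_dvd_of_nsmul_eq_zero h0
    have := (Nat.pow_dvd_pow_iff_le_right hp.one_lt).mp hdvd
    omega
  obtain ⟨i, hi⟩ := hk2
  obtain ⟨c, hcu, hc⟩ := aux_pow_mul_unit hp hsa₁ hs1 (u.1 i) (hk1 i) hi
  obtain ⟨v, hv⟩ := hcu.exists_right_inv
  -- coefficients expressing u.1 j in terms of u.1 i
  have hEex : ∀ j, ∃ b : ZMod (p ^ a₁), u.1 j = b * u.1 i := by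
    intro j
    obtain ⟨d, hd⟩ := aux_pow_mul_eq_zero hp hsa₁ (u.1 j) (hk1 j)
    refine ⟨(d : ZMod (p ^ a₁)) * v, ?_⟩
    rw [hd, hc]
    calc (p : ZMod (p ^ a₁)) ^ (a₁ - s) * (d : ZMod (p ^ a₁))
        = (p : ZMod (p ^ a₁)) ^ (a₁ - s) * (d : ZMod (p ^ a₁)) * (c * v) := by rw [hv, mul_one]
      _ = (d : ZMod (p ^ a₁)) * v * ((p : ZMod (p ^ a₁)) ^ (a₁ - s) * c) := by ring
  choose E hEspec using hEex
  -- the cast hom to the second factor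
  have hπc : (ZMod.castHom (pow_dvd_pow p ha) (ZMod (p ^ a₂))) c *
      (ZMod.castHom (pow_dvd_pow p ha) (ZMod (p ^ a₂))) v = 1 := by
    rw [← map_mul, hv, map_one]
  have hπui : (ZMod.castHom (pow_dvd_pow p ha) (ZMod (p ^ a₂))) (u.1 i)
      = (p : ZMod (p ^ a₂)) ^ (a₁ - s) *
        (ZMod.castHom (pow_dvd_pow p ha) (ZMod (p ^ a₂))) c := by
    rw [hc, map_mul, map_pow, map_natCast]
  have hBex : ∀ k, ∃ b : ZMod (p ^ a₂),
      u.2 k = b * (ZMod.castHom (pow_dvd_pow p ha) (ZMod (p ^ a₂))) (u.1 i) := by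
    intro k
    have hk : (p : ZMod (p ^ a₂)) ^ t * u.2 k = 0 := by
      have h0 : (p ^ t : ℕ) • u.2 = 0 := by rw [← hu₂]; exact addOrderOf_nsmul_eq_zero u.2
      simpa only [Pi.smul_apply, Pi.zero_apply, nsmul_eq_mul, Nat.cast_pow] using congrFun h0 k
    obtain ⟨d, hd⟩ := aux_pow_mul_eq_zero hp hta (u.2 k) hk
    refine ⟨(p : ZMod (p ^ a₂)) ^ (a₂ - t - (a₁ - s)) * (d : ZMod (p ^ a₂)) *
      (ZMod.castHom (pow_dvd_pow p ha) (ZMod (p ^ a₂))) v, ?_⟩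
    rw [hd, hπui]
    have h5 : (a₂ - t - (a₁ - s)) + (a₁ - s) = a₂ - t := by omega
    calc (p : ZMod (p ^ a₂)) ^ (a₂ - t) * (d : ZMod (p ^ a₂))
        = (p : ZMod (p ^ a₂)) ^ ((a₂ - t - (a₁ - s)) + (a₁ - s)) * (d : ZMod (p ^ a₂)) := by
          rw [h5]
      _ = (p : ZMod (p ^ a₂)) ^ (a₂ - t - (a₁ - s)) * (p : ZMod (p ^ a₂)) ^ (a₁ - s) *
          (d : ZMod (p ^ a₂)) * 1 := by rw [pow_add]; ring
      _ = _ := by rw [← hπc]; ring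
  choose B hBspec using hBex
  -- the homomorphism
  set π := ZMod.castHom (pow_dvd_pow p ha) (ZMod (p ^ a₂)) with hπdef
  set ρ := ZMod.castHom (pow_dvd_pow p (Nat.sub_le a₁ s)) (ZMod (p ^ (a₁ - s))) with hρdef
  set F : ((Fin (m + 1) → ZMod (p ^ a₁)) × (Fin n₂ → ZMod (p ^ a₂))) →
      ((Fin m → ZMod (p ^ a₁)) × (Fin n₂ → ZMod (p ^ a₂)) × ZMod (p ^ (a₁ - s))) := fun x =>
    (fun j => x.1 (i.succAbove j) - E (i.succAbove j) * x.1 i,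
     fun k => x.2 k - B k * π (x.1 i),
     ρ (v * x.1 i)) with hFdef
  have hFadd : ∀ x y, F (x + y) = F x + F y := by
    intro x y
    refine Prod.ext (funext fun j => ?_) (Prod.ext (funext fun k => ?_) ?_)
    · show (x.1 + y.1) (i.succAbove j) - E (i.succAbove j) * (x.1 + y.1) i
        = (x.1 (i.succAbove j) - E (i.succAbove j) * x.1 i)
          + (y.1 (i.succAbove j) - E (i.succAbove j) * y.1 i)
      simp only [Pi.add_apply]; ring
    · show (x.2 + y.2) k - B k * π ((x.1 + y.1) i)
        = (x.2 k - B k * π (x.1 i)) + (y.2 k - B k * π (y.1 i))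
      simp only [Pi.add_apply, map_add]; ring
    · show ρ (v * (x.1 + y.1) i) = ρ (v * x.1 i) + ρ (v * y.1 i)
      simp only [Pi.add_apply, mul_add, map_add]
  set φ := AddMonoidHom.mk' F hFadd with hφdef
  have hφu : φ u = 0 := by
    refine Prod.ext (funext fun j => ?_) (Prod.ext (funext fun k => ?_) ?_)
    · show u.1 (i.succAbove j) - E (i.succAbove j) * u.1 i = 0
      rw [← hEspec (i.succAbove j), sub_self]
    · show u.2 k - B k * π (u.1 i) = 0
      rw [← hBspec k, sub_self]
    · show ρ (v * u.1 i) = 0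
      rw [hc, show v * ((p : ZMod (p ^ a₁)) ^ (a₁ - s) * c)
        = (p : ZMod (p ^ a₁)) ^ (a₁ - s) * (c * v) by ring, hv, mul_one, map_pow, map_natCast]
      have h0 : ((p ^ (a₁ - s) : ℕ) : ZMod (p ^ (a₁ - s))) = 0 := ZMod.natCast_self _
      push_cast at h0
      exact h0
  -- kernel computation
  have hker : φ.ker = AddSubgroup.zmultiples u := by
    ext x
    simp only [AddMonoidHom.mem_ker, AddSubgroup.mem_zmultiples_iff]
    constructor
    · intro hx
      have hx' : F x = 0 := hx
      have h1 : ∀ j, x.1 (i.succAbove j) - E (i.succAbove j) * x.1 i = 0 :=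
        fun j => congrFun (congrArg Prod.fst hx') j
      have h2 : ∀ k, x.2 k - B k * π (x.1 i) = 0 :=
        fun k => congrFun (congrArg Prod.fst (congrArg Prod.snd hx')) k
      have h3 : ρ (v * x.1 i) = 0 := congrArg Prod.snd (congrArg Prod.snd hx')
      obtain ⟨μ, hμ⟩ := aux_cast_eq_zero (pow_dvd_pow p (Nat.sub_le a₁ s)) (v * x.1 i) h3
      have hxi : x.1 i = μ * u.1 i := by
        calc x.1 i = (c * v) * x.1 i := by rw [hv, one_mul]
          _ = c * (v * x.1 i) := by ring
          _ = c * (((p ^ (a₁ - s) : ℕ) : ZMod (p ^ a₁)) * μ) := by rw [hμ]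
          _ = μ * ((p : ZMod (p ^ a₁)) ^ (a₁ - s) * c) := by push_cast; ring
          _ = μ * u.1 i := by rw [← hc]
      have hcast1 : ((μ.val : ℤ) : ZMod (p ^ a₁)) = μ := by
        rw [Int.cast_natCast, ZMod.natCast_val, ZMod.cast_id]
      have hcast2 : ((μ.val : ℤ) : ZMod (p ^ a₂)) = π μ := by
        rw [Int.cast_natCast, ZMod.natCast_val, hπdef, ZMod.castHom_apply]
      refine ⟨(μ.val : ℤ), ?_⟩
      refine Prod.ext (funext fun j => ?_) (funext fun k => ?_)
      · rw [Prod.smul_fst, Pi.smul_apply, zsmul_eq_mul, hcast1]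
        rcases eq_or_ne j i with rfl | hne
        · exact hxi.symm
        · obtain ⟨z, rfl⟩ := Fin.exists_succAbove_eq hne
          have h1z := h1 z
          rw [sub_eq_zero] at h1z
          rw [h1z, hxi, hEspec (i.succAbove z)]
          ring
      · rw [Prod.smul_snd, Pi.smul_apply, zsmul_eq_mul, hcast2]
        have h2k := h2 k
        rw [sub_eq_zero] at h2k
        rw [h2k, hxi, map_mul, hBspec k]
        ring
    · rintro ⟨n, rfl⟩
      rw [map_zsmul, hφu, smul_zero]
  -- surjectivity
  have hsurj : Function.Surjective φ := by
    rintro ⟨α, β, γ⟩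
    set z : ZMod (p ^ a₁) := c * ((γ.val : ℕ) : ZMod (p ^ a₁)) with hzdef
    set x1 : Fin (m + 1) → ZMod (p ^ a₁) :=
      i.insertNth z (fun j => α j + E (i.succAbove j) * z) with hx1def
    set x2 : Fin n₂ → ZMod (p ^ a₂) := fun k => β k + B k * π z with hx2def
    have hx1i : x1 i = z := by
      rw [hx1def]; simp [Fin.insertNth_apply_same]
    have hx1s : ∀ j, x1 (i.succAbove j) = α j + E (i.succAbove j) * z := by
      intro j; rw [hx1def]; simp [Fin.insertNth_apply_succAbove]
    refine ⟨(x1, x2), ?_⟩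
    refine Prod.ext (funext fun j => ?_) (Prod.ext (funext fun k => ?_) ?_)
    · show x1 (i.succAbove j) - E (i.succAbove j) * x1 i = α j
      rw [hx1i, hx1s]
      ring
    · show x2 k - B k * π (x1 i) = β k
      rw [hx1i]
      show β k + B k * π z - B k * π z = β k
      ring
    · show ρ (v * x1 i) = γ
      rw [hx1i, hzdef,
        show v * (c * ((γ.val : ℕ) : ZMod (p ^ a₁))) = (c * v) * ((γ.val : ℕ) : ZMod (p ^ a₁))
          by ring, hv, one_mul, map_natCast, ZMod.natCast_val, ZMod.cast_id]
  exact ⟨(QuotientAddGroup.quotientAddEquivOfEq hker.symm).trans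
    (QuotientAddGroup.quotientKerEquivOfSurjective φ hsurj)⟩
end

section
/- Let p be a prime, let n_1, n_2 be positive integers, and let a_1, a_2 be integers with 1 ≤ a_2 ≤ a_1. Let L = (ℤ/p^{a_1}ℤ)^{n_1} × (ℤ/p^{a_2}ℤ)^{n_2} and let u = (u^{(1)}, u^{(2)}) ∈ L. Suppose u^{(1)} has additive order p^s and u^{(2)} has additive order p^t, where 1 ≤ s ≤ a_1, t < s, t ≤ a_2, and a_1 − s > a_2 − t. Then the quotient L / ⟨u⟩ of L by the cyclic subgroup generated by u is isomorphic to (ℤ/p^{a_1}ℤ)^{n_1−1} × (ℤ/p^{a_2}ℤ)^{n_2−1} × ℤ/p^{a_2−t}ℤ × ℤ/p^{a_1−s+t}ℤ. -/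
lemma auxA {p a s : ℕ} (hp : p.Prime) (hs : s ≤ a) (x : ZMod (p^a))
    (h : p ^ s • x = 0) : ∃ w : ZMod (p^a), x = (p : ZMod (p^a)) ^ (a - s) * w := by
  have hne : NeZero (p^a) := ⟨pow_ne_zero _ hp.pos.ne'⟩
  have hx : ((x.val : ℕ) : ZMod (p^a)) = x := ZMod.natCast_rightInverse x
  have h1 : ((p ^ s * x.val : ℕ) : ZMod (p^a)) = 0 := by
    push_cast [hx]
    rw [← Nat.cast_pow, ← nsmul_eq_mul]
    exact h
  rw [ZMod.natCast_eq_zero_iff] at h1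
  have h2 : p ^ (a - s) ∣ x.val := by
    have h3 : p ^ (a - s) * p ^ s ∣ x.val * p ^ s := by
      rw [← pow_add, Nat.sub_add_cancel hs, mul_comm x.val]
      exact h1
    exact (Nat.mul_dvd_mul_iff_right (pow_pos hp.pos s)).mp h3
  obtain ⟨m, hm⟩ := h2
  refine ⟨(m : ZMod (p^a)), ?_⟩
  rw [← hx, hm]; push_cast; ring

lemma auxB {p a s : ℕ} (hp : p.Prime) (hs : s ≤ a) (x : ZMod (p^a))
    (h : addOrderOf x = p ^ s) :
    ∃ c : (ZMod (p^a))ˣ, x = (p : ZMod (p^a)) ^ (a - s) * c := by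
  have hne : NeZero (p^a) := ⟨pow_ne_zero _ hp.pos.ne'⟩
  have hpa : ((p : ZMod (p^a)))^a = 0 := by
    have := ZMod.natCast_self (p^a)
    push_cast at this; exact this
  rcases Nat.eq_zero_or_pos s with rfl | hs1
  · refine ⟨1, ?_⟩
    have hx : x = 0 := by
      have := addOrderOf_nsmul_eq_zero x
      rw [h, pow_zero, one_smul] at this; exact this
    rw [hx, Nat.sub_zero, Units.val_one, mul_one, hpa]
  · obtain ⟨w, hw⟩ := auxA hp hs x (by rw [← h]; exact addOrderOf_nsmul_eq_zero x)
    have hwv : ((w.val : ℕ) : ZMod (p^a)) = w := ZMod.natCast_rightInverse w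
    have hwu : IsUnit w := by
      by_contra hw'
      have hcop : ¬ Nat.Coprime w.val (p^a) := by
        intro hc
        have := (ZMod.isUnit_iff_coprime w.val (p^a)).mpr hc
        rw [hwv] at this
        exact hw' this
      have hpdvd : p ∣ w.val := by
        have hgd : Nat.gcd w.val (p^a) ∣ p ^ a := Nat.gcd_dvd_right _ _
        obtain ⟨k, hk, hke⟩ := (Nat.dvd_prime_pow hp).mp hgd
        have hk1 : k ≠ 0 := by
          rintro rfl
          exact hcop (by simpa using hke)
        calc p ∣ p ^ k := dvd_pow_self p hk1
          _ = Nat.gcd w.val (p^a) := hke.symm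
          _ ∣ w.val := Nat.gcd_dvd_left _ _
      obtain ⟨m, hm⟩ := hpdvd
      have hw2 : w = (p : ZMod (p^a)) * m := by
        rw [← hwv, hm]; push_cast; ring
      have hz : p ^ (s - 1) • x = 0 := by
        rw [hw, hw2, ← Nat.cast_pow, nsmul_eq_mul]
        push_cast
        rw [show (p:ZMod (p^a))^(s-1) * ((p:ZMod (p^a)) ^ (a-s) * ((p:ZMod (p^a)) * (m:ZMod (p^a))))
            = ((p:ZMod (p^a)) ^ ((s-1)+(a-s)+1)) * m by ring]
        rw [show (s-1)+(a-s)+1 = a by omega, hpa, zero_mul]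
      have hdvd := addOrderOf_dvd_of_nsmul_eq_zero hz
      rw [h] at hdvd
      have h4 := Nat.le_of_dvd (pow_pos hp.pos _) hdvd
      have h5 := Nat.pow_lt_pow_right hp.one_lt (show s - 1 < s by omega)
      omega
    exact ⟨hwu.unit, by rw [hw, IsUnit.unit_spec]⟩

lemma auxC {p s n : ℕ} {M : Type*} [AddMonoid M] (hp : p.Prime) (hn : 0 < n)
    (w : Fin n → M) (h : addOrderOf w = p ^ s) :
    ∃ i, addOrderOf (w i) = p ^ s := by
  have hinst : Nonempty (Fin n) := Fin.pos_iff_nonempty.mp hn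
  rcases Nat.eq_zero_or_pos s with rfl | hs1
  · obtain ⟨i⟩ := hinst
    refine ⟨i, ?_⟩
    have hw : w = 0 := by
      have := addOrderOf_nsmul_eq_zero w
      rw [h, pow_zero, one_nsmul] at this; exact this
    rw [hw]; simp
  · by_contra hc
    push_neg at hc
    have hall : ∀ i, p ^ (s-1) • w i = 0 := by
      intro i
      have hdvd : addOrderOf (w i) ∣ p ^ s := by
        apply addOrderOf_dvd_of_nsmul_eq_zero
        have := addOrderOf_nsmul_eq_zero w
        rw [h] at this
        exact congrFun this i
      obtain ⟨k, hk, hke⟩ := (Nat.dvd_prime_pow hp).mp hdvd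
      have hks : k ≠ s := fun he => hc i (by rw [hke, he])
      exact addOrderOf_dvd_iff_nsmul_eq_zero.mp
        (by rw [hke]; exact pow_dvd_pow p (by omega))
    have : p ^ (s-1) • w = 0 := funext fun i => hall i
    have hdvd := addOrderOf_dvd_of_nsmul_eq_zero this
    rw [h] at hdvd
    have h4 := Nat.le_of_dvd (pow_pos hp.pos _) hdvd
    have h5 := Nat.pow_lt_pow_right hp.one_lt (show s - 1 < s by omega)
    omega

set_option maxHeartbeats 1000000 in
theorem stmt14 (p : ℕ) (hp : p.Prime) (n₁ n₂ : ℕ) (hn₁ : 0 < n₁) (hn₂ : 0 < n₂)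
    (a₁ a₂ s t : ℕ) (ha₂ : 1 ≤ a₂) (ha : a₂ ≤ a₁)
    (u : (Fin n₁ → ZMod (p ^ a₁)) × (Fin n₂ → ZMod (p ^ a₂)))
    (hu₁ : addOrderOf u.1 = p ^ s) (hu₂ : addOrderOf u.2 = p ^ t)
    (hs1 : 1 ≤ s) (hsa₁ : s ≤ a₁) (hts : t < s) (hta₂ : t ≤ a₂)
    (hst : a₂ - t < a₁ - s) :
    Nonempty ((((Fin n₁ → ZMod (p ^ a₁)) × (Fin n₂ → ZMod (p ^ a₂))) ⧸
        AddSubgroup.zmultiples u) ≃+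
      ((Fin (n₁ - 1) → ZMod (p ^ a₁)) × (Fin (n₂ - 1) → ZMod (p ^ a₂)) ×
        ZMod (p ^ (a₂ - t)) × ZMod (p ^ (a₁ - s + t)))) := by
  have hne1 : NeZero (p^a₁) := ⟨pow_ne_zero _ hp.pos.ne'⟩
  have hne2 : NeZero (p^a₂) := ⟨pow_ne_zero _ hp.pos.ne'⟩
  have hne3 : NeZero (p^(a₂-t)) := ⟨pow_ne_zero _ hp.pos.ne'⟩
  have hne4 : NeZero (p^(a₁-s+t)) := ⟨pow_ne_zero _ hp.pos.ne'⟩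
  obtain ⟨m₁, rfl⟩ : ∃ m, n₁ = m + 1 := ⟨n₁ - 1, by omega⟩
  obtain ⟨m₂, rfl⟩ : ∃ m, n₂ = m + 1 := ⟨n₂ - 1, by omega⟩
  obtain ⟨i, hi⟩ := auxC hp hn₁ u.1 hu₁
  obtain ⟨j, hj⟩ := auxC hp hn₂ u.2 hu₂
  obtain ⟨c, hc⟩ := auxB hp hsa₁ (u.1 i) hi
  obtain ⟨d, hd⟩ := auxB hp hta₂ (u.2 j) hj
  have hW : ∀ k, ∃ w, u.1 k = (p : ZMod (p^a₁))^(a₁-s) * w := by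
    intro k
    apply auxA hp hsa₁
    have h0 := addOrderOf_nsmul_eq_zero u.1
    rw [hu₁] at h0
    exact congrFun h0 k
  choose w hw using hW
  have hV : ∀ k, ∃ v, u.2 k = (p : ZMod (p^a₂))^(a₂-t) * v := by
    intro k
    apply auxA hp hta₂
    have h0 := addOrderOf_nsmul_eq_zero u.2
    rw [hu₂] at h0
    exact congrFun h0 k
  choose v hv using hV
  have hpa4 : ((p : ZMod (p^(a₁-s+t))))^(a₁-s+t) = 0 := by
    have h0 := ZMod.natCast_self (p^(a₁-s+t))
    push_cast at h0; exact h0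
  have hpa3 : ((p : ZMod (p^(a₂-t))))^(a₂-t) = 0 := by
    have h0 := ZMod.natCast_self (p^(a₂-t))
    push_cast at h0; exact h0
  have hψ0 : (zmultiplesHom (ZMod (p^(a₁-s+t)))
      ((p : ZMod (p^(a₁-s+t)))^(a₁-s-(a₂-t)))) ((p^a₂ : ℕ) : ℤ) = 0 := by
    simp only [zmultiplesHom_apply]
    rw [zsmul_eq_mul]
    push_cast
    rw [← pow_add, show a₂ + (a₁-s-(a₂-t)) = a₁-s+t by omega, hpa4]
  let ψ : ZMod (p^a₂) →+ ZMod (p^(a₁-s+t)) :=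
    ZMod.lift (p^a₂) ⟨zmultiplesHom _ ((p : ZMod (p^(a₁-s+t)))^(a₁-s-(a₂-t))), hψ0⟩
  have hψcast : ∀ k : ℕ, ψ ((k : ℕ) : ZMod (p^a₂)) =
      (k : ZMod (p^(a₁-s+t))) * (p : ZMod (p^(a₁-s+t)))^(a₁-s-(a₂-t)) := by
    intro k
    have h0 : ((k : ℕ) : ZMod (p^a₂)) = ((k : ℤ) : ZMod (p^a₂)) := by push_cast; ring
    rw [h0]
    show ZMod.lift (p^a₂) _ _ = _
    rw [ZMod.lift_coe]
    simp only [zmultiplesHom_apply]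
    rw [zsmul_eq_mul]
    push_cast
    ring
  have h31 : p^(a₂-t) ∣ p^a₂ := pow_dvd_pow p (by omega)
  have h42 : p^(a₁-s+t) ∣ p^a₁ := pow_dvd_pow p (by omega)
  -- the homomorphism Φ
  let Φ : ((Fin (m₁+1) → ZMod (p ^ a₁)) × (Fin (m₂+1) → ZMod (p ^ a₂))) →+
      ((Fin m₁ → ZMod (p ^ a₁)) × (Fin m₂ → ZMod (p ^ a₂)) ×
        ZMod (p ^ (a₂ - t)) × ZMod (p ^ (a₁ - s + t))) :=
    AddMonoidHom.mk' (fun x =>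
      (fun k => x.1 (i.succAbove k) - w (i.succAbove k) * (↑c⁻¹ * x.1 i),
       fun k => x.2 (j.succAbove k) - v (j.succAbove k) * (↑d⁻¹ * x.2 j),
       ZMod.castHom h31 (ZMod (p^(a₂-t))) (↑d⁻¹ * x.2 j),
       ZMod.castHom h42 (ZMod (p^(a₁-s+t))) (↑c⁻¹ * x.1 i) - ψ (↑d⁻¹ * x.2 j)))
      (by
        intro x y
        refine Prod.ext ?_ (Prod.ext ?_ (Prod.ext ?_ ?_))
        · funext k
          simp only [Prod.fst_add, Prod.snd_add, Pi.add_apply]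
          ring
        · funext k
          simp only [Prod.fst_add, Prod.snd_add, Pi.add_apply]
          ring
        · simp only [Prod.fst_add, Prod.snd_add, Pi.add_apply, mul_add, map_add]
        · simp only [Prod.fst_add, Prod.snd_add, Pi.add_apply, mul_add, map_add]
          ring)
  have hf : ∀ x, Φ x =
      (fun k => x.1 (i.succAbove k) - w (i.succAbove k) * (↑c⁻¹ * x.1 i),
       fun k => x.2 (j.succAbove k) - v (j.succAbove k) * (↑d⁻¹ * x.2 j),
       ZMod.castHom h31 (ZMod (p^(a₂-t))) (↑d⁻¹ * x.2 j),
       ZMod.castHom h42 (ZMod (p^(a₁-s+t))) (↑c⁻¹ * x.1 i) - ψ (↑d⁻¹ * x.2 j)) :=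
    fun _ => rfl
  have key_c : (↑c⁻¹ : ZMod (p^a₁)) * ((p : ZMod (p^a₁))^(a₁-s) * ↑c) = (p : ZMod (p^a₁))^(a₁-s) := by
    rw [mul_comm ((p : ZMod (p^a₁))^(a₁-s)) (↑c : ZMod (p^a₁)), ← mul_assoc]
    simp
  have key_d : (↑d⁻¹ : ZMod (p^a₂)) * ((p : ZMod (p^a₂))^(a₂-t) * ↑d) = (p : ZMod (p^a₂))^(a₂-t) := by
    rw [mul_comm ((p : ZMod (p^a₂))^(a₂-t)) (↑d : ZMod (p^a₂)), ← mul_assoc]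
    simp
  have hΦu : Φ u = 0 := by
    rw [hf]
    refine Prod.ext ?_ (Prod.ext ?_ (Prod.ext ?_ ?_))
    · funext k
      show u.1 (i.succAbove k) - w (i.succAbove k) * (↑c⁻¹ * u.1 i) = 0
      rw [hc, key_c, hw (i.succAbove k)]
      ring
    · funext k
      show u.2 (j.succAbove k) - v (j.succAbove k) * (↑d⁻¹ * u.2 j) = 0
      rw [hd, key_d, hv (j.succAbove k)]
      ring
    · show ZMod.castHom h31 (ZMod (p^(a₂-t))) (↑d⁻¹ * u.2 j) = 0
      rw [hd, key_d, map_pow, map_natCast, hpa3]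
    · show ZMod.castHom h42 (ZMod (p^(a₁-s+t))) (↑c⁻¹ * u.1 i) - ψ (↑d⁻¹ * u.2 j) = 0
      rw [hc, key_c, hd, key_d, map_pow, map_natCast]
      have h0 : ((p : ZMod (p^a₂)))^(a₂-t) = (((p^(a₂-t) : ℕ)) : ZMod (p^a₂)) := by
        push_cast; ring
      rw [h0, hψcast]
      push_cast
      rw [← pow_add, show a₂ - t + (a₁-s-(a₂-t)) = a₁ - s by omega, sub_self]
  have hsurj : Function.Surjective Φ := by
    intro y
    obtain ⟨k₃, hk₃⟩ := ZMod.natCast_zmod_surjective (n := p^(a₂-t)) y.2.2.1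
    obtain ⟨k₄, hk₄⟩ := ZMod.natCast_zmod_surjective (n := p^(a₁-s+t))
      (y.2.2.2 + ψ ((k₃ : ℕ) : ZMod (p^a₂)))
    refine ⟨(i.insertNth (↑c * ((k₄ : ℕ) : ZMod (p^a₁)))
        (fun l => y.1 l + w (i.succAbove l) * ((k₄ : ℕ) : ZMod (p^a₁))),
      j.insertNth (↑d * ((k₃ : ℕ) : ZMod (p^a₂)))
        (fun l => y.2.1 l + v (j.succAbove l) * ((k₃ : ℕ) : ZMod (p^a₂)))), ?_⟩
    rw [hf]
    refine Prod.ext ?_ (Prod.ext ?_ (Prod.ext ?_ ?_))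
    · funext l
      dsimp only
      rw [Fin.insertNth_apply_same, Fin.insertNth_apply_succAbove,
        Units.inv_mul_cancel_left]
      ring
    · funext l
      dsimp only
      rw [Fin.insertNth_apply_same, Fin.insertNth_apply_succAbove,
        Units.inv_mul_cancel_left]
      ring
    · dsimp only
      rw [Fin.insertNth_apply_same, Units.inv_mul_cancel_left, map_natCast, hk₃]
    · dsimp only
      rw [Fin.insertNth_apply_same, Fin.insertNth_apply_same,
        Units.inv_mul_cancel_left, Units.inv_mul_cancel_left, map_natCast, hk₄]
      ring
  have hkle : AddSubgroup.zmultiples u ≤ Φ.ker :=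
    AddSubgroup.zmultiples_le.mpr (AddMonoidHom.mem_ker.mpr hΦu)
  have hcardzm : Nat.card (AddSubgroup.zmultiples u) = p ^ s := by
    rw [Nat.card_zmultiples, Prod.addOrderOf, hu₁, hu₂]
    exact Nat.dvd_antisymm (Nat.lcm_dvd dvd_rfl (pow_dvd_pow p hts.le)) (Nat.dvd_lcm_left _ _)
  have hcardL : Nat.card ((Fin (m₁+1) → ZMod (p ^ a₁)) × (Fin (m₂+1) → ZMod (p ^ a₂)))
      = p ^ (a₁*(m₁+1) + a₂*(m₂+1)) := by
    rw [Nat.card_prod, Nat.card_pi, Nat.card_pi]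
    simp only [Nat.card_zmod, Finset.prod_const, Finset.card_univ, Fintype.card_fin]
    rw [← pow_mul, ← pow_mul, ← pow_add]
  have hcardT : Nat.card ((Fin m₁ → ZMod (p ^ a₁)) × (Fin m₂ → ZMod (p ^ a₂)) ×
        ZMod (p ^ (a₂ - t)) × ZMod (p ^ (a₁ - s + t)))
      = p ^ (a₁*m₁ + (a₂*m₂ + (a₂-t + (a₁-s+t)))) := by
    rw [Nat.card_prod, Nat.card_prod, Nat.card_prod, Nat.card_pi, Nat.card_pi]
    simp only [Nat.card_zmod, Finset.prod_const, Finset.card_univ, Fintype.card_fin]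
    rw [← pow_mul, ← pow_mul, ← pow_add, ← pow_add, ← pow_add]
  have hcardker : Nat.card Φ.ker = p ^ s := by
    have h1 := AddSubgroup.card_eq_card_quotient_mul_card_addSubgroup Φ.ker
    have h2 : Nat.card (((Fin (m₁+1) → ZMod (p ^ a₁)) × (Fin (m₂+1) → ZMod (p ^ a₂))) ⧸ Φ.ker)
        = Nat.card ((Fin m₁ → ZMod (p ^ a₁)) × (Fin m₂ → ZMod (p ^ a₂)) ×
          ZMod (p ^ (a₂ - t)) × ZMod (p ^ (a₁ - s + t))) :=
      Nat.card_congr (QuotientAddGroup.quotientKerEquivOfSurjective Φ hsurj).toEquiv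
    rw [h2, hcardT, hcardL] at h1
    have h3 : a₁*(m₁+1) + a₂*(m₂+1) = (a₁*m₁ + (a₂*m₂ + (a₂-t + (a₁-s+t)))) + s := by
      rw [Nat.mul_add, Nat.mul_add, Nat.mul_one, Nat.mul_one]
      omega
    rw [h3, pow_add] at h1
    exact (Nat.eq_of_mul_eq_mul_left (pow_pos hp.pos _) h1.symm)
  have hker : Φ.ker = AddSubgroup.zmultiples u := by
    refine (AddSubgroup.eq_of_le_of_card_ge hkle ?_).symm
    rw [hcardzm, hcardker]
  exact ⟨(QuotientAddGroup.quotientAddEquivOfEq hker.symm).trans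
    (QuotientAddGroup.quotientKerEquivOfSurjective Φ hsurj)⟩
end

section
/- Let p be a prime, let n_1, n_2 be positive integers, and let a_1, a_2, s be integers with 1 ≤ s ≤ a_2 ≤ a_1. Let L = (ℤ/p^{a_1}ℤ)^{n_1} × (ℤ/p^{a_2}ℤ)^{n_2} and let u = (u^{(1)}, u^{(2)}) ∈ L. Suppose u^{(2)} has additive order exactly p^s and the additive order of u^{(1)} divides p^s. Then the quotient L / ⟨u⟩ of L by the cyclic subgroup generated by u is isomorphic to (ℤ/p^{a_1}ℤ)^{n_1} × (ℤ/p^{a_2}ℤ)^{n_2−1} × ℤ/p^{a_2−s}ℤ. -/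
open AddSubgroup

-- membership in zmultiples of p^(a-s) for elements killed by p^s
lemma aux_mem {p a s : ℕ} (hp : p.Prime) (hsa : s ≤ a) (x : ZMod (p^a))
    (hx : p ^ s • x = 0) :
    x ∈ zmultiples ((p^(a-s) : ℕ) : ZMod (p^a)) := by
  have hpa : (p:ℕ)^a ≠ 0 := pow_ne_zero _ hp.pos.ne'
  haveI : NeZero (p^a) := ⟨hpa⟩
  have hx' : ((p ^ s * x.val : ℕ) : ZMod (p^a)) = 0 := by
    rw [Nat.cast_mul, ZMod.natCast_val, ZMod.cast_id]
    rw [← hx]; simp [nsmul_eq_mul]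
  rw [ZMod.natCast_eq_zero_iff] at hx'
  have hdvd : p ^ (a - s) ∣ x.val := by
    have h1 : p ^ (a - s) * p ^ s ∣ x.val * p ^ s := by
      rw [← pow_add]; rw [Nat.sub_add_cancel hsa]; rwa [mul_comm] at hx'
    exact (Nat.mul_dvd_mul_iff_right (pow_pos hp.pos s)).mp h1
  obtain ⟨c, hc⟩ := hdvd
  refine ⟨(c : ℤ), ?_⟩
  have : x = ((x.val : ℕ) : ZMod (p^a)) := by rw [ZMod.natCast_val, ZMod.cast_id]
  rw [this, hc]
  push_cast
  rw [natCast_zsmul, nsmul_eq_mul]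
  push_cast
  ring

lemma aux_ord {p a s : ℕ} (hp : p.Prime) (hsa : s ≤ a) :
    addOrderOf ((p^(a-s) : ℕ) : ZMod (p^a)) = p ^ s := by
  rw [ZMod.addOrderOf_coe _ (pow_ne_zero _ hp.pos.ne')]
  rw [Nat.gcd_eq_right (pow_dvd_pow p (Nat.sub_le a s))]
  rw [Nat.pow_div (Nat.sub_le a s) hp.pos]  -- p^a / p^(a-s) = p^(a-(a-s))
  congr 1
  omega

lemma aux_zmul_eq {p a s : ℕ} (hp : p.Prime) (hsa : s ≤ a) (g : ZMod (p^a))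
    (hg : addOrderOf g = p ^ s) :
    zmultiples g = zmultiples ((p^(a-s) : ℕ) : ZMod (p^a)) := by
  haveI : NeZero (p^a) := ⟨pow_ne_zero _ hp.pos.ne'⟩
  have hle : zmultiples g ≤ zmultiples ((p^(a-s) : ℕ) : ZMod (p^a)) := by
    rw [zmultiples_le]
    exact aux_mem hp hsa g (by rw [← hg]; exact addOrderOf_nsmul_eq_zero g)
  exact AddSubgroup.eq_of_le_of_card_ge hle (by
    rw [Nat.card_zmultiples, Nat.card_zmultiples, hg, aux_ord hp hsa])

lemma aux_mem_gen {p a s : ℕ} (hp : p.Prime) (hsa : s ≤ a) (g y : ZMod (p^a))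
    (hg : addOrderOf g = p ^ s) (hy : p ^ s • y = 0) : ∃ k : ℤ, y = k • g := by
  have := aux_mem hp hsa y hy
  rw [← aux_zmul_eq hp hsa g hg] at this
  obtain ⟨k, hk⟩ := this
  exact ⟨k, hk.symm⟩
open AddSubgroup

noncomputable def aux_zmod_quot (n m : ℕ) (h : m ∣ n) (hn : n ≠ 0) (hm : m ≠ 0) :
    (ZMod n ⧸ zmultiples ((m : ℕ) : ZMod n)) ≃+ ZMod m := by
  haveI : NeZero n := ⟨hn⟩
  haveI : NeZero m := ⟨hm⟩
  set f : ZMod n →+ ZMod m := (ZMod.castHom h (ZMod m)).toAddMonoidHom with hf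
  have hfapp : ∀ x : ZMod n, f x = ((x.val : ℕ) : ZMod m) := by
    intro x
    simp only [hf, RingHom.toAddMonoidHom_eq_coe, AddMonoidHom.coe_coe]
    rw [ZMod.castHom_apply, ZMod.natCast_val]
  have hker : f.ker = zmultiples ((m:ℕ) : ZMod n) := by
    ext x
    rw [AddMonoidHom.mem_ker, hfapp, ZMod.natCast_eq_zero_iff]
    constructor
    · rintro ⟨c, hc⟩
      refine ⟨(c : ℤ), ?_⟩
      have hx : x = ((x.val : ℕ) : ZMod n) := by rw [ZMod.natCast_val, ZMod.cast_id]
      show (c : ℤ) • ((m:ℕ) : ZMod n) = x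
      rw [hx, hc, natCast_zsmul, nsmul_eq_mul]
      push_cast; ring
    · rintro ⟨k, hk⟩
      have h2 : ((x.val : ℕ) : ZMod m) = 0 := by
        rw [← hfapp, ← hk, map_zsmul, hfapp]
        have : ((((m:ℕ):ZMod n).val : ℕ) : ZMod m) = 0 := by
          rw [ZMod.val_natCast, ZMod.natCast_eq_zero_iff]
          exact (Nat.dvd_mod_iff h).mpr dvd_rfl
        rw [this, smul_zero]
      rwa [ZMod.natCast_eq_zero_iff] at h2
  exact (QuotientAddGroup.quotientAddEquivOfEq hker.symm).trans
    (QuotientAddGroup.quotientKerEquivOfSurjective f (by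
      intro y
      refine ⟨((y.val : ℕ) : ZMod n), ?_⟩
      rw [hfapp]
      rw [ZMod.val_natCast_of_lt (lt_of_lt_of_le (ZMod.val_lt y) (Nat.le_of_dvd (Nat.pos_of_ne_zero hn) h))]
      rw [ZMod.natCast_val, ZMod.cast_id]))

noncomputable def aux_prod_quot {A B : Type*} [AddCommGroup A] [AddCommGroup B] (v : B) :
    ((A × B) ⧸ zmultiples ((0 : A), v)) ≃+ A × (B ⧸ zmultiples v) := by
  set f : A × B →+ A × (B ⧸ zmultiples v) :=
    (AddMonoidHom.id A).prodMap (QuotientAddGroup.mk' (zmultiples v)) with hf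
  have hker : f.ker = zmultiples ((0 : A), v) := by
    ext ⟨a, b⟩
    simp only [AddMonoidHom.mem_ker, hf, AddMonoidHom.coe_prodMap, Prod.map_apply,
      AddMonoidHom.id_apply, Prod.mk_eq_zero, QuotientAddGroup.mk'_apply,
      QuotientAddGroup.eq_zero_iff]
    constructor
    · rintro ⟨ha, k, hk⟩
      exact ⟨k, by simp [Prod.smul_mk, ha, hk]⟩
    · rintro ⟨k, hk⟩
      have h1 := congrArg Prod.fst hk
      have h2 := congrArg Prod.snd hk
      simp at h1 h2
      exact ⟨h1.symm, k, h2⟩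
  exact (QuotientAddGroup.quotientAddEquivOfEq hker.symm).trans
    (QuotientAddGroup.quotientKerEquivOfSurjective f
      (Function.Surjective.prodMap (fun a => ⟨a, rfl⟩) (QuotientAddGroup.mk'_surjective _)))

noncomputable def aux_pi_quot {ι M : Type*} [DecidableEq ι] [AddCommGroup M]
    (i₀ : ι) (g : M) :
    ((ι → M) ⧸ zmultiples (Pi.single i₀ g)) ≃+ (M ⧸ zmultiples g) × ({j : ι // j ≠ i₀} → M) := by
  set restr : (ι → M) →+ ({j : ι // j ≠ i₀} → M) :=
    { toFun := fun x j => x j.1, map_zero' := rfl, map_add' := fun _ _ => rfl } with hrestr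
  set f : (ι → M) →+ (M ⧸ zmultiples g) × ({j : ι // j ≠ i₀} → M) :=
    AddMonoidHom.prod ((QuotientAddGroup.mk' (zmultiples g)).comp
      (Pi.evalAddMonoidHom (fun _ => M) i₀)) restr with hf
  have hker : f.ker = zmultiples (Pi.single i₀ g) := by
    ext x
    simp only [AddMonoidHom.mem_ker, hf, AddMonoidHom.prod_apply, AddMonoidHom.coe_comp,
      Function.comp_apply, Pi.evalAddMonoidHom_apply, QuotientAddGroup.mk'_apply,
      Prod.mk_eq_zero, hrestr, AddMonoidHom.coe_mk, ZeroHom.coe_mk]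
    rw [QuotientAddGroup.eq_zero_iff]
    constructor
    · rintro ⟨⟨kk, hkk⟩, hz⟩
      refine ⟨kk, funext fun j => ?_⟩
      by_cases hj : j = i₀
      · subst hj; simpa [Pi.smul_apply] using hkk
      · have := congrFun hz ⟨j, hj⟩
        simp only [Pi.zero_apply] at this
        simp [Pi.smul_apply, Pi.single_eq_of_ne hj, this]
    · rintro ⟨kk, hkk⟩
      constructor
      · exact ⟨kk, by simpa [Pi.smul_apply] using congrFun hkk i₀⟩
      · funext j
        have := congrFun hkk j.1
        simp [Pi.smul_apply, Pi.single_eq_of_ne j.2] at this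
        simpa using this.symm
  have hsurj : Function.Surjective f := by
    rintro ⟨q, y⟩
    obtain ⟨b, hb⟩ := QuotientAddGroup.mk'_surjective (zmultiples g) q
    refine ⟨fun j => if h : j = i₀ then b else y ⟨j, h⟩, ?_⟩
    simp only [hf, AddMonoidHom.prod_apply, AddMonoidHom.coe_comp, Function.comp_apply,
      Pi.evalAddMonoidHom_apply, QuotientAddGroup.mk'_apply, hrestr, AddMonoidHom.coe_mk,
      ZeroHom.coe_mk]
    refine Prod.ext ?_ ?_
    · simpa [dif_pos] using hb
    · funext j
      simp [dif_neg j.2]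
  exact (QuotientAddGroup.quotientAddEquivOfEq hker.symm).trans
    (QuotientAddGroup.quotientKerEquivOfSurjective f hsurj)

def aux_pi_congr {α β M : Type*} [AddCommGroup M] (e : α ≃ β) : (α → M) ≃+ (β → M) :=
  { Equiv.arrowCongr e (Equiv.refl M) with map_add' := fun _ _ => rfl }

set_option maxHeartbeats 2000000 in
theorem stmt15 (p : ℕ) (hp : p.Prime) (n₁ n₂ : ℕ) (hn₁ : 0 < n₁) (hn₂ : 0 < n₂)
    (a₁ a₂ s : ℕ) (hs : 1 ≤ s) (hsa₂ : s ≤ a₂) (ha : a₂ ≤ a₁)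
    (u : (Fin n₁ → ZMod (p ^ a₁)) × (Fin n₂ → ZMod (p ^ a₂)))
    (hu₂ : addOrderOf u.2 = p ^ s) (hu₁ : addOrderOf u.1 ∣ p ^ s) :
    Nonempty ((((Fin n₁ → ZMod (p ^ a₁)) × (Fin n₂ → ZMod (p ^ a₂))) ⧸
        AddSubgroup.zmultiples u) ≃+
      ((Fin n₁ → ZMod (p ^ a₁)) × (Fin (n₂ - 1) → ZMod (p ^ a₂)) ×
        ZMod (p ^ (a₂ - s)))) := by
  have hsa₁ : s ≤ a₁ := hsa₂.trans ha
  -- pointwise kill facts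
  have hps2 : p ^ s • u.2 = 0 := by
    rw [← hu₂]; exact addOrderOf_nsmul_eq_zero u.2
  have hps2' : ∀ j, p ^ s • u.2 j = 0 := fun j => by
    simpa using congrFun hps2 j
  have hps1 : p ^ s • u.1 = 0 := addOrderOf_dvd_iff_nsmul_eq_zero.mp hu₁
  have hps1' : ∀ j, p ^ s • u.1 j = 0 := fun j => by
    simpa using congrFun hps1 j
  -- find pivot index i₀
  have hex : ∃ i, ¬ p ^ (s - 1) • u.2 i = 0 := by
    by_contra h
    push_neg at h
    have hz : p ^ (s - 1) • u.2 = 0 := funext fun i => by simpa using h i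
    have hdvd := addOrderOf_dvd_of_nsmul_eq_zero hz
    rw [hu₂] at hdvd
    have := (Nat.pow_dvd_pow_iff_le_right hp.one_lt).mp hdvd
    omega
  obtain ⟨i₀, hi₀⟩ := hex
  set g : ZMod (p ^ a₂) := u.2 i₀ with hgdef
  have hgdvd : addOrderOf g ∣ p ^ s := addOrderOf_dvd_iff_nsmul_eq_zero.mpr (hps2' i₀)
  have hg : addOrderOf g = p ^ s := by
    obtain ⟨t, ht, hto⟩ := (Nat.dvd_prime_pow hp).mp hgdvd
    rcases Nat.lt_or_ge t s with hlt | hge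
    · exfalso
      apply hi₀
      apply addOrderOf_dvd_iff_nsmul_eq_zero.mp
      rw [hto]
      exact pow_dvd_pow p (by omega)
    · rw [hto]; congr 1; omega
  -- second-component coefficients
  have hm : ∀ j, ∃ c : ℤ, u.2 j = c • g := fun j =>
    aux_mem_gen hp hsa₂ g (u.2 j) hg (hps2' j)
  choose m hmm using hm
  -- the homomorphism φ : ZMod (p^a₂) →+ ZMod (p^a₁)
  have hφ0 : (zmultiplesHom (ZMod (p ^ a₁)) ((p ^ (a₁ - a₂) : ℕ) : ZMod (p ^ a₁)))
      ((p ^ a₂ : ℕ) : ℤ) = 0 := by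
    simp only [zmultiplesHom_apply, natCast_zsmul, nsmul_eq_mul]
    rw [← Nat.cast_mul, ← pow_add, Nat.add_sub_cancel' ha, ZMod.natCast_self]
  set φ : ZMod (p ^ a₂) →+ ZMod (p ^ a₁) :=
    ZMod.lift (p ^ a₂) ⟨zmultiplesHom (ZMod (p ^ a₁)) ((p ^ (a₁ - a₂) : ℕ) : ZMod (p ^ a₁)), hφ0⟩
    with hφdef
  have hφnat : ∀ c : ℕ, φ ((c : ℕ) : ZMod (p ^ a₂)) = ((c * p ^ (a₁ - a₂) : ℕ) : ZMod (p ^ a₁)) := by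
    intro c
    have : ((c : ℕ) : ZMod (p ^ a₂)) = (((c : ℕ) : ℤ) : ZMod (p ^ a₂)) := by push_cast; rfl
    rw [hφdef, this, ZMod.lift_coe]
    simp only [zmultiplesHom_apply, natCast_zsmul, nsmul_eq_mul]
    push_cast; ring
  have hφpw : φ ((p ^ (a₂ - s) : ℕ) : ZMod (p ^ a₂)) = ((p ^ (a₁ - s) : ℕ) : ZMod (p ^ a₁)) := by
    rw [hφnat, ← pow_add]
    congr 2
    omega
  -- first-component coefficients
  have hk : ∀ j, ∃ c : ℤ, u.1 j = c • φ g := by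
    intro j
    obtain ⟨c, hc⟩ := aux_mem hp hsa₁ (u.1 j) (hps1' j)
    have hpw2 : ((p ^ (a₂ - s) : ℕ) : ZMod (p ^ a₂)) ∈ AddSubgroup.zmultiples g := by
      rw [aux_zmul_eq hp hsa₂ g hg]
      exact AddSubgroup.mem_zmultiples _
    obtain ⟨d, hd⟩ := hpw2
    have hc' : c • ((p ^ (a₁ - s) : ℕ) : ZMod (p ^ a₁)) = u.1 j := hc
    have hd' : d • g = ((p ^ (a₂ - s) : ℕ) : ZMod (p ^ a₂)) := hd
    refine ⟨c * d, ?_⟩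
    calc u.1 j = c • ((p ^ (a₁ - s) : ℕ) : ZMod (p ^ a₁)) := hc'.symm
      _ = c • φ ((p ^ (a₂ - s) : ℕ) : ZMod (p ^ a₂)) := by rw [hφpw]
      _ = c • φ (d • g) := by rw [hd']
      _ = c • (d • φ g) := by rw [map_zsmul]
      _ = (c * d) • φ g := smul_smul c d (φ g)
  choose k hkk using hk
  -- the automorphism E₁
  set E₁ : ((Fin n₁ → ZMod (p ^ a₁)) × (Fin n₂ → ZMod (p ^ a₂))) ≃+
      ((Fin n₁ → ZMod (p ^ a₁)) × (Fin n₂ → ZMod (p ^ a₂))) :=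
    { toFun := fun x => (fun j => x.1 j - k j • φ (x.2 i₀), x.2)
      invFun := fun y => (fun j => y.1 j + k j • φ (y.2 i₀), y.2)
      left_inv := fun x => by
        refine Prod.ext ?_ rfl
        funext j
        simp
      right_inv := fun y => by
        refine Prod.ext ?_ rfl
        funext j
        simp
      map_add' := fun x y => by
        refine Prod.ext ?_ rfl
        funext j
        simp only [Prod.fst_add, Pi.add_apply, Prod.snd_add, map_add, smul_add]
        abel } with hE₁def
  -- the automorphism E₂ on the second component
  set m' : Fin n₂ → ℤ := Function.update m i₀ 0 with hm'def
  have hm'i₀ : m' i₀ = 0 := Function.update_self i₀ 0 m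
  set E₂ : (Fin n₂ → ZMod (p ^ a₂)) ≃+ (Fin n₂ → ZMod (p ^ a₂)) :=
    { toFun := fun x => fun j => x j - m' j • x i₀
      invFun := fun y => fun j => y j + m' j • y i₀
      left_inv := fun x => by
        funext j
        simp only [hm'i₀, zero_smul, sub_zero]
        abel
      right_inv := fun y => by
        funext j
        simp only [hm'i₀, zero_smul, add_zero]
        abel
      map_add' := fun x y => by
        funext j
        simp only [Pi.add_apply, smul_add]
        abel } with hE₂def
  set E := E₁.trans (AddEquiv.prodCongr (AddEquiv.refl _) E₂) with hEdef
  have hEu : E u = ((0 : Fin n₁ → ZMod (p ^ a₁)), Pi.single i₀ g) := by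
    have h1 : E u = ((fun j => u.1 j - k j • φ (u.2 i₀)) ,
        (fun j => u.2 j - m' j • u.2 i₀)) := rfl
    rw [h1]
    refine Prod.ext ?_ ?_
    · funext j
      show u.1 j - k j • φ (u.2 i₀) = 0
      rw [← hgdef, ← hkk j, sub_self]
    · funext j
      show u.2 j - m' j • u.2 i₀ = (Pi.single i₀ g : Fin n₂ → ZMod (p ^ a₂)) j
      by_cases hj : j = i₀
      · subst hj
        rw [hm'i₀]
        simp [hgdef]
      · rw [hm'def, Function.update_of_ne hj, ← hgdef, ← hmm j, Pi.single_eq_of_ne hj, sub_self]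
  -- assemble everything
  have hmap : AddSubgroup.map (E : _ →+ _) (AddSubgroup.zmultiples u) =
      AddSubgroup.zmultiples ((0 : Fin n₁ → ZMod (p ^ a₁)),
        (Pi.single i₀ g : Fin n₂ → ZMod (p ^ a₂))) := by
    rw [← hEu]
    exact AddMonoidHom.map_zmultiples _ _
  have e2 : (((Fin n₁ → ZMod (p ^ a₁)) × (Fin n₂ → ZMod (p ^ a₂))) ⧸
      AddSubgroup.zmultiples ((0 : Fin n₁ → ZMod (p ^ a₁)),
        (Pi.single i₀ g : Fin n₂ → ZMod (p ^ a₂)))) ≃+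
      ((Fin n₁ → ZMod (p ^ a₁)) ×
        ((Fin n₂ → ZMod (p ^ a₂)) ⧸
          AddSubgroup.zmultiples (Pi.single i₀ g : Fin n₂ → ZMod (p ^ a₂)))) :=
    aux_prod_quot _
  have e3 : ((Fin n₂ → ZMod (p ^ a₂)) ⧸
      AddSubgroup.zmultiples (Pi.single i₀ g : Fin n₂ → ZMod (p ^ a₂))) ≃+
      ((ZMod (p ^ a₂) ⧸ AddSubgroup.zmultiples g) ×
        ({j : Fin n₂ // j ≠ i₀} → ZMod (p ^ a₂))) :=
    aux_pi_quot i₀ g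
  have e4 : (ZMod (p ^ a₂) ⧸ AddSubgroup.zmultiples g) ≃+ ZMod (p ^ (a₂ - s)) :=
    (QuotientAddGroup.quotientAddEquivOfEq (aux_zmul_eq hp hsa₂ g hg)).trans
      (aux_zmod_quot (p ^ a₂) (p ^ (a₂ - s)) (pow_dvd_pow p (Nat.sub_le a₂ s))
        (pow_ne_zero _ hp.pos.ne') (pow_ne_zero _ hp.pos.ne'))
  have e5 : ({j : Fin n₂ // j ≠ i₀} → ZMod (p ^ a₂)) ≃+ (Fin (n₂ - 1) → ZMod (p ^ a₂)) :=
    aux_pi_congr (Fintype.equivFinOfCardEq (by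
      rw [Fintype.card_subtype_compl, Fintype.card_subtype_eq, Fintype.card_fin]))
  exact ⟨(QuotientAddGroup.congr _ _ E hmap).trans (e2.trans
    (AddEquiv.prodCongr (AddEquiv.refl _)
      (e3.trans ((AddEquiv.prodCongr e4 e5).trans (AddEquiv.prodComm)))))⟩
end

section
/- Let p be a prime, let n_1, n_2 be positive integers, and let a_1, a_2, s be integers with 1 ≤ s ≤ a_1 and a_2 ≤ a_1. Let L = (ℤ/p^{a_1}ℤ)^{n_1} × (ℤ/p^{a_2}ℤ)^{n_2}, and let K be any cyclic subgroup of L of order p^s. Then at least one of the following holds: (i) L/K ≅ (ℤ/p^{a_1}ℤ)^{n_1−1} × (ℤ/p^{a_2}ℤ)^{n_2} × ℤ/p^{a_1−s}ℤ; (ii) s ≤ a_2 and L/K ≅ (ℤ/p^{a_1}ℤ)^{n_1} × (ℤ/p^{a_2}ℤ)^{n_2−1} × ℤ/p^{a_2−s}ℤ; (iii) there exists an integer b with a_2 − s < b < a_1 − s and 0 ≤ b ≤ a_2 such that L/K ≅ (ℤ/p^{a_1}ℤ)^{n_1−1} × ℤ/p^{a_1+a_2−s−b}ℤ × (ℤ/p^{a_2}ℤ)^{n_2−1}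 × ℤ/p^{b}ℤ. -/
/-!
Write `K = ⟨x⟩`. Automorphisms of the two homogeneous blocks `(ℤ/p^aᵢ)^nᵢ` bring `x` to the
normal form `((p^c₁, 0, …, 0), (p^c₂, 0, …, 0))`, so that `s = max (a₁ - c₁) (a₂ - c₂)`, and
only the two distinguished coordinates take part in the quotient. There,
`(ℤ/p^a₁ × ℤ/p^a₂) / ⟨(p^c₁, p^c₂)⟩ ≅ ℤ/p^(a₁ + a₂ - s - b) × ℤ/p^b` with `b = min c₁ c₂`:
an explicit surjection kills the generator, and a count of orders shows that its kernel is no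
larger.
The three alternatives are the cases `b + s = a₁`, `b + s = a₂` and `a₂ < b + s < a₁`.
-/

theorem Nat.lcm_pow_pow (p m n : ℕ) : Nat.lcm (p ^ m) (p ^ n) = p ^ max m n := by
  rcases le_total m n with h | h
  · rw [max_eq_right h, Nat.lcm_eq_right (pow_dvd_pow p h)]
  · rw [max_eq_left h, Nat.lcm_eq_left (pow_dvd_pow p h)]

theorem Fin.consLinearEquiv_symm_single_zero (R M : Type*) [Semiring R] [AddCommMonoid M]
    [Module R M] {n : ℕ} (t : M) :
    (Fin.consLinearEquiv R fun _ : Fin (n + 1) => M).symm (Pi.single 0 t) = (t, 0) := by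
  ext i
  · rfl
  · exact Pi.single_eq_of_ne (Fin.succ_ne_zero i) t

theorem QuotientAddGroup.nonempty_addEquiv_of_surjective_of_card_eq {G T : Type*}
    [AddCommGroup G] [AddGroup T] [Finite G] {K : AddSubgroup G} (F : G →+ T)
    (hF : Function.Surjective F) (hK : K ≤ F.ker)
    (hcard : Nat.card G = Nat.card T * Nat.card K) : Nonempty (G ⧸ K ≃+ T) := by
  have : Finite T := Finite.of_surjective F hF
  have hker : Nat.card F.ker = Nat.card K := by
    have := AddSubgroup.card_eq_card_quotient_mul_card_addSubgroup F.ker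
    rw [Nat.card_congr (quotientKerEquivOfSurjective F hF).toEquiv, hcard] at this
    exact (Nat.eq_of_mul_eq_mul_left Nat.card_pos this).symm
  obtain rfl := AddSubgroup.eq_of_le_of_card_ge hK hker.le
  exact ⟨quotientKerEquivOfSurjective F hF⟩

theorem Matrix.det_one_updateCol {n R : Type*} [Fintype n] [DecidableEq n] [CommRing R]
    (j : n) (w : n → R) : ((1 : Matrix n n R).updateCol j w).det = w j := by
  rw [← cramer_apply, cramer_one]
  rfl

theorem exists_linearEquiv_apply_eq_single {R ι : Type*} [CommRing R] [Fintype ι]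
    [DecidableEq ι] {w : ι → R} {i : ι} (hw : IsUnit (w i)) (j : ι) :
    ∃ e : (ι → R) ≃ₗ[R] (ι → R), e w = Pi.single j 1 := by
  set σ := LinearEquiv.funCongrLeft R R (Equiv.swap i j)
  have hσw : IsUnit ((σ w) j) := by simpa [σ] using hw
  -- `M` has determinant `(σ w) j`, a unit, and sends `Pi.single j 1` to `σ w`
  set M := (1 : Matrix ι ι R).updateCol j (σ w)
  let _ : Invertible M := M.invertibleOfIsUnitDet (by rwa [Matrix.det_one_updateCol])
  refine ⟨σ.trans (M.toLinearEquiv' ‹_›).symm, ?_⟩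
  rw [LinearEquiv.trans_apply, LinearEquiv.symm_apply_eq]
  change σ w = M.mulVec (Pi.single j 1)
  rw [Matrix.mulVec_single_one]
  ext k
  simp [M]

namespace ZMod

theorem exists_eq_pow_mul_unit {p : ℕ} (hp : p.Prime) {a : ℕ} (z : ZMod (p ^ a)) :
    ∃ c ≤ a, ∃ ε : (ZMod (p ^ a))ˣ, z = (p : ZMod (p ^ a)) ^ c * ε := by
  rcases eq_or_ne z 0 with rfl | hz
  · exact ⟨a, le_rfl, 1, by rw [Units.val_one, mul_one, ← Nat.cast_pow, natCast_self]⟩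
  have : NeZero (p ^ a) := ⟨pow_ne_zero _ hp.ne_zero⟩
  have hval : z.val ≠ 0 := (val_ne_zero z).mpr hz
  obtain ⟨c, m, hpm, hm⟩ := Nat.exists_eq_pow_mul_and_not_dvd hval p hp.ne_one
  have hca : c < a := by
    refine (Nat.pow_lt_pow_iff_right hp.one_lt).mp (lt_of_le_of_lt ?_ (val_lt z))
    exact Nat.le_of_dvd (Nat.pos_of_ne_zero hval) ⟨m, hm⟩
  have hcop : m.Coprime (p ^ a) := (hp.coprime_iff_not_dvd.mpr hpm).symm.pow_right a
  refine ⟨c, hca.le, unitOfCoprime m hcop, ?_⟩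
  rw [coe_unitOfCoprime, ← natCast_zmod_val z, hm]
  push_cast
  rfl

theorem exists_eq_pow_smul_and_isUnit {p : ℕ} (hp : p.Prime) {a : ℕ} {ι : Type*} [Finite ι]
    [Nonempty ι] (u : ι → ZMod (p ^ a)) :
    ∃ c ≤ a, ∃ w : ι → ZMod (p ^ a), ∃ i, IsUnit (w i) ∧ u = (p : ZMod (p ^ a)) ^ c • w := by
  choose c hc ε hε using fun i => exists_eq_pow_mul_unit hp (u i)
  obtain ⟨i, hi⟩ := Finite.exists_min c
  refine ⟨c i, hc i, fun j => (p : ZMod (p ^ a)) ^ (c j - c i) * ε j, i, by simp, ?_⟩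
  ext j
  rw [hε j, Pi.smul_apply, smul_eq_mul, ← mul_assoc, ← pow_add, Nat.add_sub_cancel' (hi j)]

theorem exists_linearEquiv_apply_eq_single_pow {p : ℕ} (hp : p.Prime) {a : ℕ} {ι : Type*}
    [Fintype ι] [DecidableEq ι] (u : ι → ZMod (p ^ a)) (j : ι) :
    ∃ c ≤ a, ∃ e : (ι → ZMod (p ^ a)) ≃ₗ[ZMod (p ^ a)] (ι → ZMod (p ^ a)),
      e u = Pi.single j ((p : ZMod (p ^ a)) ^ c) := by
  have : Nonempty ι := ⟨j⟩
  obtain ⟨c, hc, w, i, hw, rfl⟩ := exists_eq_pow_smul_and_isUnit hp u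
  obtain ⟨e, he⟩ := exists_linearEquiv_apply_eq_single hw j
  exact ⟨c, hc, e, by rw [map_smul, he, ← Pi.single_smul, smul_eq_mul, mul_one]⟩

theorem addOrderOf_natCast_pow {p : ℕ} (hp : 0 < p) {a c : ℕ} (hc : c ≤ a) :
    addOrderOf ((p : ZMod (p ^ a)) ^ c) = p ^ (a - c) := by
  rw [← Nat.cast_pow, addOrderOf_coe _ (pow_ne_zero _ hp.ne'),
    Nat.gcd_eq_right (pow_dvd_pow p hc), Nat.pow_div hc hp]

theorem addOrderOf_prod_natCast_pow {p : ℕ} (hp : 0 < p) {a₁ a₂ c₁ c₂ : ℕ} (h₁ : c₁ ≤ a₁)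
    (h₂ : c₂ ≤ a₂) :
    addOrderOf ((p : ZMod (p ^ a₁)) ^ c₁, (p : ZMod (p ^ a₂)) ^ c₂) =
      p ^ max (a₁ - c₁) (a₂ - c₂) := by
  rw [Prod.addOrderOf_mk, addOrderOf_natCast_pow hp h₁, addOrderOf_natCast_pow hp h₂,
    Nat.lcm_pow_pow]

theorem exists_surjective_prod_apply_pow_eq_zero_of_le (p a₁ a₂ : ℕ) {c₁ c₂ : ℕ}
    (h₂ : c₂ ≤ a₂) (h : c₂ ≤ c₁) :
    ∃ f : ZMod (p ^ a₁) × ZMod (p ^ a₂) →+ ZMod (p ^ min a₁ (a₂ + c₁ - c₂)) × ZMod (p ^ c₂),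
      Function.Surjective f ∧ f ((p : ZMod (p ^ a₁)) ^ c₁, (p : ZMod (p ^ a₂)) ^ c₂) = 0 := by
  -- `f (ξ, η) = (ξ - p ^ (c₁ - c₂) * η, η)`; the first coordinate is well defined on `η`
  -- because `p ^ B` divides `p ^ (a₂ + (c₁ - c₂))`
  set B := min a₁ (a₂ + c₁ - c₂)
  let g₁ := castHom (pow_dvd_pow p (min_le_left _ _)) (ZMod (p ^ B))
  let t : ZMod (p ^ B) := -(p : ZMod (p ^ B)) ^ (c₁ - c₂)
  have ht : (p ^ a₂ : ℤ) • t = 0 := by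
    have hB : ((p ^ (a₂ + (c₁ - c₂)) : ℕ) : ZMod (p ^ B)) = 0 :=
      (natCast_eq_zero_iff _ _).mpr (pow_dvd_pow p (by omega))
    rw [pow_add] at hB
    simp only [t, zsmul_eq_mul, mul_neg, neg_eq_zero]
    exact_mod_cast hB
  let g₂ := lift (p ^ a₂) ⟨zmultiplesHom _ t, by simpa using ht⟩
  let g₃ := castHom (pow_dvd_pow p h₂) (ZMod (p ^ c₂))
  refine ⟨(g₁.toAddMonoidHom.coprod g₂).prod (g₃.toAddMonoidHom.comp (AddMonoidHom.snd _ _)),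
    ?_, ?_⟩
  · rintro ⟨τ, ρ⟩
    obtain ⟨η, rfl⟩ := castHom_surjective (pow_dvd_pow p h₂) ρ
    obtain ⟨ξ, hξ⟩ := castHom_surjective (pow_dvd_pow p (min_le_left _ _)) (τ - g₂ η)
    rw [castHom_apply] at hξ
    exact ⟨(ξ, η), by simp [g₁, g₃, hξ]⟩
  · have hg₂ : g₂ ((p : ZMod (p ^ a₂)) ^ c₂) = -(p : ZMod (p ^ B)) ^ c₁ := by
      have := lift_coe (p ^ a₂) ⟨zmultiplesHom _ t, by simpa using ht⟩ (p ^ c₂ : ℤ)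
      push_cast at this
      rw [this]
      simp [t, zsmul_eq_mul, ← pow_add, Nat.add_sub_cancel' h]
    refine Prod.ext ?_ ?_
    · change g₁ ((p : ZMod (p ^ a₁)) ^ c₁) + g₂ ((p : ZMod (p ^ a₂)) ^ c₂) = 0
      rw [hg₂, map_pow, map_natCast, add_neg_cancel]
    · change g₃ ((p : ZMod (p ^ a₂)) ^ c₂) = 0
      rw [map_pow, map_natCast, ← Nat.cast_pow, natCast_self]

theorem exists_surjective_prod_apply_pow_eq_zero (p : ℕ) {a₁ a₂ c₁ c₂ : ℕ} (h₁ : c₁ ≤ a₁)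
    (h₂ : c₂ ≤ a₂) :
    ∃ f : ZMod (p ^ a₁) × ZMod (p ^ a₂) →+
        ZMod (p ^ (a₁ + a₂ - max (a₁ - c₁) (a₂ - c₂) - min c₁ c₂)) × ZMod (p ^ min c₁ c₂),
      Function.Surjective f ∧ f ((p : ZMod (p ^ a₁)) ^ c₁, (p : ZMod (p ^ a₂)) ^ c₂) = 0 := by
  rcases le_total c₂ c₁ with h | h
  · rw [show min c₁ c₂ = c₂ by omega,
      show a₁ + a₂ - max (a₁ - c₁) (a₂ - c₂) - c₂ = min a₁ (a₂ + c₁ - c₂) by omega]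
    exact exists_surjective_prod_apply_pow_eq_zero_of_le p a₁ a₂ h₂ h
  · rw [show min c₁ c₂ = c₁ by omega,
      show a₁ + a₂ - max (a₁ - c₁) (a₂ - c₂) - c₁ = min a₂ (a₁ + c₂ - c₁) by omega]
    obtain ⟨f, hf, hf0⟩ := exists_surjective_prod_apply_pow_eq_zero_of_le p a₂ a₁ h₁ h
    let σ : ZMod (p ^ a₁) × ZMod (p ^ a₂) ≃+ ZMod (p ^ a₂) × ZMod (p ^ a₁) := AddEquiv.prodComm
    exact ⟨f.comp σ.toAddMonoidHom, hf.comp σ.surjective, hf0⟩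

theorem nonempty_quotient_zmultiples_prod_addEquiv {p : ℕ} (hp : 0 < p) {a₁ a₂ c₁ c₂ : ℕ}
    (h₁ : c₁ ≤ a₁) (h₂ : c₂ ≤ a₂) (P : Type*) [AddCommGroup P] [Finite P] :
    Nonempty ((((ZMod (p ^ a₁) × ZMod (p ^ a₂)) × P) ⧸
        AddSubgroup.zmultiples (((p : ZMod (p ^ a₁)) ^ c₁, (p : ZMod (p ^ a₂)) ^ c₂), (0 : P))) ≃+
      (ZMod (p ^ (a₁ + a₂ - max (a₁ - c₁) (a₂ - c₂) - min c₁ c₂)) × ZMod (p ^ min c₁ c₂)) ×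
        P) := by
  have : NeZero p := ⟨hp.ne'⟩
  obtain ⟨ψ, hψ, hψ0⟩ := exists_surjective_prod_apply_pow_eq_zero p h₁ h₂
  refine QuotientAddGroup.nonempty_addEquiv_of_surjective_of_card_eq
    (ψ.prodMap (AddMonoidHom.id P)) (hψ.prodMap Function.surjective_id) ?_ ?_
  · rw [AddSubgroup.zmultiples_le, AddMonoidHom.mem_ker, AddMonoidHom.coe_prodMap,
      Prod.map_apply, hψ0, map_zero, Prod.mk_zero_zero]
  · rw [Nat.card_zmultiples, Prod.addOrderOf_mk, addOrderOf_zero, Nat.lcm_one_right,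
      addOrderOf_prod_natCast_pow hp h₁ h₂]
    have hexp : a₁ + a₂ - max (a₁ - c₁) (a₂ - c₂) - min c₁ c₂ + min c₁ c₂ +
        max (a₁ - c₁) (a₂ - c₂) = a₁ + a₂ := by omega
    simp only [Nat.card_prod, Nat.card_zmod]
    rw [mul_right_comm _ (Nat.card P), ← pow_add, ← pow_add, ← pow_add, hexp]

theorem exists_addEquiv_apply_eq_normal_form {p : ℕ} (hp : p.Prime) {a₁ a₂ m₁ m₂ : ℕ}
    (x : (Fin (m₁ + 1) → ZMod (p ^ a₁)) × (Fin (m₂ + 1) → ZMod (p ^ a₂))) :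
    ∃ c₁ ≤ a₁, ∃ c₂ ≤ a₂, ∃ Φ : (Fin (m₁ + 1) → ZMod (p ^ a₁)) × (Fin (m₂ + 1) → ZMod (p ^ a₂)) ≃+
        (ZMod (p ^ a₁) × ZMod (p ^ a₂)) × ((Fin m₁ → ZMod (p ^ a₁)) × (Fin m₂ → ZMod (p ^ a₂))),
      Φ x = (((p : ZMod (p ^ a₁)) ^ c₁, (p : ZMod (p ^ a₂)) ^ c₂), 0) := by
  obtain ⟨c₁, hc₁, e₁, he₁⟩ := exists_linearEquiv_apply_eq_single_pow hp x.1 0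
  obtain ⟨c₂, hc₂, e₂, he₂⟩ := exists_linearEquiv_apply_eq_single_pow hp x.2 0
  refine ⟨c₁, hc₁, c₂, hc₂, (AddEquiv.prodCongr
    (e₁.trans (Fin.consLinearEquiv _ _).symm).toAddEquiv
    (e₂.trans (Fin.consLinearEquiv _ _).symm).toAddEquiv).trans (AddEquiv.prodProdProdComm _ _ _ _),
    ?_⟩
  change AddEquiv.prodProdProdComm _ _ _ _
    ((Fin.consLinearEquiv (ZMod (p ^ a₁)) _).symm (e₁ x.1),
      (Fin.consLinearEquiv (ZMod (p ^ a₂)) _).symm (e₂ x.2)) = _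
  rw [he₁, he₂, Fin.consLinearEquiv_symm_single_zero, Fin.consLinearEquiv_symm_single_zero]
  rfl

theorem exists_nonempty_quotient_zmultiples_addEquiv {p : ℕ} (hp : p.Prime) {a₁ a₂ m₁ m₂ s : ℕ}
    (ha : a₂ ≤ a₁) (x : (Fin (m₁ + 1) → ZMod (p ^ a₁)) × (Fin (m₂ + 1) → ZMod (p ^ a₂)))
    (hx : addOrderOf x = p ^ s) :
    ∃ b ≤ a₂, a₂ ≤ b + s ∧ b + s ≤ a₁ ∧
      Nonempty (((Fin (m₁ + 1) → ZMod (p ^ a₁)) × (Fin (m₂ + 1) → ZMod (p ^ a₂))) ⧸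
          AddSubgroup.zmultiples x ≃+
        (Fin m₁ → ZMod (p ^ a₁)) × ZMod (p ^ (a₁ + a₂ - s - b)) × (Fin m₂ → ZMod (p ^ a₂)) ×
          ZMod (p ^ b)) := by
  have : NeZero p := ⟨hp.ne_zero⟩
  obtain ⟨c₁, hc₁, c₂, hc₂, Φ, hΦx⟩ := exists_addEquiv_apply_eq_normal_form hp x
  have hs : s = max (a₁ - c₁) (a₂ - c₂) := by
    rw [← Φ.addOrderOf_eq, hΦx, Prod.addOrderOf_mk, addOrderOf_zero, Nat.lcm_one_right,
      addOrderOf_prod_natCast_pow hp.pos hc₁ hc₂] at hx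
    exact Nat.pow_right_injective hp.two_le hx.symm
  obtain ⟨e⟩ := nonempty_quotient_zmultiples_prod_addEquiv hp.pos hc₁ hc₂
    ((Fin m₁ → ZMod (p ^ a₁)) × (Fin m₂ → ZMod (p ^ a₂)))
  rw [← hΦx, ← hs] at e
  refine ⟨min c₁ c₂, (min_le_right _ _).trans hc₂, by omega, by omega, ⟨?_⟩⟩
  exact ((QuotientAddGroup.congr _ _ Φ (AddMonoidHom.map_zmultiples _ x)).trans e).trans
    ((AddEquiv.prodProdProdComm _ _ _ _).trans
      ((AddEquiv.prodCongr AddEquiv.prodComm AddEquiv.prodComm).trans AddEquiv.prodAssoc))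

end ZMod

theorem stmt16_general (p : ℕ) (hp : p.Prime) (n₁ n₂ : ℕ) (hn₁ : 0 < n₁) (hn₂ : 0 < n₂)
    (a₁ a₂ s : ℕ) (ha : a₂ ≤ a₁)
    (K : AddSubgroup ((Fin n₁ → ZMod (p ^ a₁)) × (Fin n₂ → ZMod (p ^ a₂))))
    (hKcyc : IsAddCyclic K) (hKcard : Nat.card K = p ^ s) :
    Nonempty ((((Fin n₁ → ZMod (p ^ a₁)) × (Fin n₂ → ZMod (p ^ a₂))) ⧸ K) ≃+
        ((Fin (n₁ - 1) → ZMod (p ^ a₁)) × (Fin n₂ → ZMod (p ^ a₂)) ×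
          ZMod (p ^ (a₁ - s)))) ∨
    (s ≤ a₂ ∧
      Nonempty ((((Fin n₁ → ZMod (p ^ a₁)) × (Fin n₂ → ZMod (p ^ a₂))) ⧸ K) ≃+
        ((Fin n₁ → ZMod (p ^ a₁)) × (Fin (n₂ - 1) → ZMod (p ^ a₂)) ×
          ZMod (p ^ (a₂ - s))))) ∨
    (∃ b : ℕ, (a₂ : ℤ) - (s : ℤ) < (b : ℤ) ∧ (b : ℤ) < (a₁ : ℤ) - (s : ℤ) ∧ b ≤ a₂ ∧
      Nonempty ((((Fin n₁ → ZMod (p ^ a₁)) × (Fin n₂ → ZMod (p ^ a₂))) ⧸ K) ≃+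
        ((Fin (n₁ - 1) → ZMod (p ^ a₁)) × ZMod (p ^ (a₁ + a₂ - s - b)) ×
          (Fin (n₂ - 1) → ZMod (p ^ a₂)) × ZMod (p ^ b)))) := by
  obtain ⟨m₁, rfl⟩ := Nat.exists_eq_add_one_of_ne_zero hn₁.ne'
  obtain ⟨m₂, rfl⟩ := Nat.exists_eq_add_one_of_ne_zero hn₂.ne'
  obtain ⟨x, rfl⟩ := K.isAddCyclic_iff_exists_zmultiples_eq_top.mp hKcyc
  rw [Nat.card_zmultiples] at hKcard
  obtain ⟨b, hb, hab₂, hab₁, ⟨e⟩⟩ := ZMod.exists_nonempty_quotient_zmultiples_addEquiv hp ha x hKcard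
  rcases (by omega : b + s = a₁ ∨ b + s = a₂ ∨ (a₂ < b + s ∧ b + s < a₁)) with h | h | h
  · left
    obtain rfl : b = a₁ - s := by omega
    rw [show a₁ + a₂ - s - (a₁ - s) = a₂ by omega] at e
    exact ⟨e.trans (AddEquiv.prodCongr (AddEquiv.refl _) (AddEquiv.prodAssoc.symm.trans
      (AddEquiv.prodCongr (Fin.consLinearEquiv ℤ fun _ => ZMod (p ^ a₂)).toAddEquiv
        (AddEquiv.refl _))))⟩
  · right; left
    refine ⟨by omega, ?_⟩
    obtain rfl : b = a₂ - s := by omega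
    rw [show a₁ + a₂ - s - (a₂ - s) = a₁ by omega] at e
    exact ⟨e.trans (AddEquiv.prodAssoc.symm.trans (AddEquiv.prodCongr
      (AddEquiv.prodComm.trans (Fin.consLinearEquiv ℤ fun _ => ZMod (p ^ a₁)).toAddEquiv)
      (AddEquiv.refl _)))⟩
  · right; right
    exact ⟨b, by omega, by omega, hb, ⟨e⟩⟩

theorem stmt16 (p : ℕ) (hp : p.Prime) (n₁ n₂ : ℕ) (hn₁ : 0 < n₁) (hn₂ : 0 < n₂)
    (a₁ a₂ s : ℕ) (hs : 1 ≤ s) (hsa₁ : s ≤ a₁) (ha : a₂ ≤ a₁)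
    (K : AddSubgroup ((Fin n₁ → ZMod (p ^ a₁)) × (Fin n₂ → ZMod (p ^ a₂))))
    (hKcyc : IsAddCyclic K) (hKcard : Nat.card K = p ^ s) :
    Nonempty ((((Fin n₁ → ZMod (p ^ a₁)) × (Fin n₂ → ZMod (p ^ a₂))) ⧸ K) ≃+
        ((Fin (n₁ - 1) → ZMod (p ^ a₁)) × (Fin n₂ → ZMod (p ^ a₂)) ×
          ZMod (p ^ (a₁ - s)))) ∨
    (s ≤ a₂ ∧
      Nonempty ((((Fin n₁ → ZMod (p ^ a₁)) × (Fin n₂ → ZMod (p ^ a₂))) ⧸ K) ≃+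
        ((Fin n₁ → ZMod (p ^ a₁)) × (Fin (n₂ - 1) → ZMod (p ^ a₂)) ×
          ZMod (p ^ (a₂ - s))))) ∨
    (∃ b : ℕ, (a₂ : ℤ) - (s : ℤ) < (b : ℤ) ∧ (b : ℤ) < (a₁ : ℤ) - (s : ℤ) ∧ b ≤ a₂ ∧
      Nonempty ((((Fin n₁ → ZMod (p ^ a₁)) × (Fin n₂ → ZMod (p ^ a₂))) ⧸ K) ≃+
        ((Fin (n₁ - 1) → ZMod (p ^ a₁)) × ZMod (p ^ (a₁ + a₂ - s - b)) ×
          (Fin (n₂ - 1) → ZMod (p ^ a₂)) × ZMod (p ^ b)))) :=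
  stmt16_general p hp n₁ n₂ hn₁ hn₂ a₁ a₂ s ha K hKcyc hKcard
end
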